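/- arXiv:math/0503030 — 8 statements merged into one kernel-verified Lean document; each statement's English description precedes it below -/
import Mathlib

section
/- Let G be a non-abelian group of order pq, where p and q are primes with p > q. Then G has exactly one proper non-trivial normal subgroup H, H is (1 + (p-1)/q)-decomposable, and G is {1, 1 + (p-1)/q}-decomposable. -/
/-- `ncc A` is the number of conjugacy classes of `G` contained in the subgroup `A`. -/
noncomputable def ncc {G : Type*} [Group G] (A : Subgroup G) : ℕ :=
  Nat.card {c : ConjClasses G // c.carrier ⊆ (A : Set G)}

/-- `KG G` is the set of values `ncc A` for `A` a proper normal subgroup of `G`. -/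
def KG (G : Type*) [Group G] : Set ℕ :=
  {n | ∃ A : Subgroup G, A.Normal ∧ A ≠ ⊤ ∧ ncc A = n}

/-- `G` is `X`-decomposable if `KG G = X`. -/
def XDecomposable (G : Type*) [Group G] (X : Set ℕ) : Prop := KG G = X

/-!
The Sylow `p`-subgroup `P` is normal, because the number of Sylow `p`-subgroups divides `q < p`
and is `1` modulo `p`. The centre of `G` is trivial, since a quotient by the centre of prime order
would be cyclic. Hence every `g ≠ 1` of the abelian group `P` has centralizer exactly `P`, so its
conjugacy class has `q` elements, and counting the classes that partition `P` gives
`p = 1 + (ncc P - 1) q`. A normal subgroup of order `p` lies in every Sylow `p`-subgroup, and a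
normal subgroup of order `q` would commute with `P`, hence be central; so `P` is the only proper
nontrivial normal subgroup, and `ncc ⊥ = 1` accounts for the other value of `KG G`.
-/

open Subgroup

theorem Nat.dvd_prime_mul_prime {p q d : ℕ} (hp : p.Prime) (hq : q.Prime) :
    d ∣ p * q ↔ d = 1 ∨ d = p ∨ d = q ∨ d = p * q := by
  refine ⟨fun hd => ?_, ?_⟩
  · obtain ⟨a, b, ha, hb, rfl⟩ := Nat.dvd_mul.mp hd
    rcases (Nat.dvd_prime hp).mp ha with rfl | rfl <;>
      rcases (Nat.dvd_prime hq).mp hb with rfl | rfl <;> simp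
  · rintro (rfl | rfl | rfl | rfl) <;> simp

section

variable {G : Type*} [Group G]

theorem ConjClasses.carrier_one : (1 : ConjClasses G).carrier = {1} := by
  ext g
  rw [ConjClasses.mem_carrier_iff_mk_eq, ConjClasses.one_eq_mk_one,
    ConjClasses.mk_eq_mk_iff_isConj, isConj_one_left, Set.mem_singleton_iff]

theorem ConjClasses.nat_card_carrier_mk (g : G) :
    Nat.card (ConjClasses.mk g).carrier = (centralizer {g}).index := by
  rw [← ConjAct.orbit_eq_carrier_conjClasses, Nat.card_coe_set_eq, ← MulAction.index_stabilizer,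
    centralizer_eq_comap_stabilizer]
  exact (index_comap_of_surjective _ ConjAct.toConjAct.surjective).symm

theorem ncc_bot : ncc (⊥ : Subgroup G) = 1 := by
  refine Nat.card_eq_one_iff_exists.mpr ⟨⟨1, by simp [ConjClasses.carrier_one]⟩, ?_⟩
  rintro ⟨c, hc⟩
  obtain ⟨g, rfl⟩ := ConjClasses.mk_surjective c
  obtain rfl : g = 1 := mem_bot.mp (hc ConjClasses.mem_carrier_mk)
  rfl

theorem KG_eq_pair_of_normal_eq_bot_or_eq {N : Subgroup G} (hN : N.Normal) (hNtop : N ≠ ⊤)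
    (h : ∀ H : Subgroup G, H.Normal → H ≠ ⊤ → H = ⊥ ∨ H = N) : KG G = {1, ncc N} := by
  ext n
  simp only [KG, Set.mem_ofPred_eq, Set.mem_insert_iff, Set.mem_singleton_iff]
  constructor
  · rintro ⟨H, hH, htop, rfl⟩
    rcases h H hH htop with rfl | rfl
    · exact Or.inl ncc_bot
    · exact Or.inr rfl
  · rintro (rfl | rfl)
    · exact ⟨⊥, inferInstance, fun h => hNtop (eq_top_iff.mpr (h ▸ bot_le)), ncc_bot⟩
    · exact ⟨N, hN, hNtop, rfl⟩

namespace Subgroup.Normal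

variable {A : Subgroup G}

theorem carrier_mk_subset (hA : A.Normal) {g : G} (hg : g ∈ A) :
    (ConjClasses.mk g).carrier ⊆ A := by
  intro x hx
  rw [ConjClasses.mem_carrier_iff_mk_eq, ConjClasses.mk_eq_mk_iff_isConj] at hx
  obtain ⟨c, rfl⟩ := isConj_iff.mp hx.symm
  exact hA.conj_mem g hg c

def sigmaConjClassesEquiv (hA : A.Normal) :
    (Σ c : {c : ConjClasses G // c.carrier ⊆ A}, c.1.carrier) ≃ A where
  toFun x := ⟨x.2, x.1.2 x.2.2⟩
  invFun g := ⟨⟨ConjClasses.mk g, hA.carrier_mk_subset g.2⟩, ⟨g, ConjClasses.mem_carrier_mk⟩⟩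
  left_inv := by
    rintro ⟨⟨c, hc⟩, ⟨g, hg⟩⟩
    obtain rfl := ConjClasses.mem_carrier_iff_mk_eq.mp hg
    rfl
  right_inv _ := rfl

theorem nat_card_eq_one_add_ncc_sub_one_mul [Finite G] (hA : A.Normal) {k : ℕ}
    (hk : ∀ g ∈ A, g ≠ 1 → Nat.card (ConjClasses.mk g).carrier = k) :
    Nat.card A = 1 + (ncc A - 1) * k := by
  classical
  let _ := Fintype.ofFinite {c : ConjClasses G // c.carrier ⊆ A}
  let one : {c : ConjClasses G // c.carrier ⊆ A} := ⟨1, by simp [ConjClasses.carrier_one]⟩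
  have hone : Nat.card one.1.carrier = 1 := by simp [one, ConjClasses.carrier_one]
  have hrest : ∀ c ∈ ({one}ᶜ : Finset _), Nat.card c.1.carrier = k := by
    rintro ⟨c, hc⟩ hne
    obtain ⟨g, rfl⟩ := ConjClasses.mk_surjective c
    refine hk g (hc ConjClasses.mem_carrier_mk) ?_
    rintro rfl
    simp [one, ConjClasses.one_eq_mk_one] at hne
  rw [← Nat.card_congr hA.sigmaConjClassesEquiv, Nat.card_sigma, Fintype.sum_eq_add_sum_compl one,
    hone, Finset.sum_congr rfl hrest, Finset.sum_const, Finset.card_compl, Finset.card_singleton,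
    smul_eq_mul, ncc, Nat.card_eq_fintype_card]

end Subgroup.Normal

theorem isMulCommutative_of_index_center_dvd_prime {r : ℕ} (hr : r.Prime)
    (h : (center G).index ∣ r) : IsMulCommutative G :=
  have : Fact r.Prime := ⟨hr⟩
  have : IsCyclic (G ⧸ center G) := isCyclic_of_card_dvd_prime h
  isMulCommutative_of_isCyclic_quotient_center_self G

theorem Subgroup.le_center_of_normal_of_coprime [Finite G] {H K : Subgroup G} (hH : H.Normal)
    (hK : K.Normal) [IsMulCommutative H] (hcop : (Nat.card H).Coprime (Nat.card K))
    (hcard : Nat.card H * Nat.card K = Nat.card G) : H ≤ center G := by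
  have hKH : K ≤ centralizer (H : Set G) := fun k hk => mem_centralizer_iff.mpr fun h hh =>
    commute_of_normal_of_disjoint H K hH hK (disjoint_of_coprime_natCard hcop) h k hh hk
  have hdvd : Nat.card G ∣ Nat.card (centralizer (H : Set G)) := by
    rw [← hcard]
    exact hcop.mul_dvd_of_dvd_of_dvd (card_dvd_of_le (le_centralizer H)) (card_dvd_of_le hKH)
  have htop : centralizer (H : Set G) = ⊤ :=
    eq_top_of_card_eq _ (Nat.dvd_antisymm (card_subgroup_dvd_card _) hdvd)
  intro h hh
  exact centralizer_eq_top_iff_subset.mp htop hh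

variable {p q : ℕ}

theorem center_eq_bot_of_card_eq_prime_mul_prime (hp : p.Prime) (hq : q.Prime)
    (hcard : Nat.card G = p * q) (hG : ¬ IsMulCommutative G) : center G = ⊥ := by
  have hmul := card_mul_index (center G)
  rw [hcard] at hmul
  rcases (Nat.dvd_prime_mul_prime hp hq).mp (hcard ▸ card_subgroup_dvd_card (center G))
    with h | h | h | h
  · exact card_eq_one.mp h
  · rw [h] at hmul
    exact absurd (isMulCommutative_of_index_center_dvd_prime hq
      (Nat.eq_of_mul_eq_mul_left hp.pos hmul).dvd) hG
  · rw [h, mul_comm p] at hmul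
    exact absurd (isMulCommutative_of_index_center_dvd_prime hp
      (Nat.eq_of_mul_eq_mul_left hq.pos hmul).dvd) hG
  · rw [h, Nat.mul_eq_left (Nat.mul_pos hp.pos hq.pos).ne'] at hmul
    exact absurd (isMulCommutative_of_index_center_dvd_prime hp (hmul ▸ one_dvd p)) hG

namespace Sylow

variable [Finite G] [hp : Fact p.Prime]

theorem card_eq_of_card_eq_prime_mul_prime (hq : q.Prime) (hpq : p ≠ q)
    (hcard : Nat.card G = p * q) (P : Sylow p G) : Nat.card P = p := by
  rw [P.card_eq_multiplicity, hcard, Nat.factorization_mul hp.out.ne_zero hq.ne_zero,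
    Finsupp.add_apply, hp.out.factorization_self,
    Nat.factorization_eq_zero_of_not_dvd fun h => hpq ((Nat.prime_dvd_prime_iff_eq hp.out hq).mp h),
    pow_one]

theorem index_eq_of_card_eq_prime_mul_prime (hq : q.Prime) (hpq : p ≠ q)
    (hcard : Nat.card G = p * q) (P : Sylow p G) : (P : Subgroup G).index = q := by
  have h := card_mul_index (P : Subgroup G)
  rw [P.card_eq_of_card_eq_prime_mul_prime hq hpq hcard, hcard] at h
  exact Nat.eq_of_mul_eq_mul_left hp.out.pos h

theorem normal_of_card_eq_prime_mul_prime (hq : q.Prime) (hpq : q < p)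
    (hcard : Nat.card G = p * q) (P : Sylow p G) : (P : Subgroup G).Normal := by
  have hmod := card_sylow_modEq_one p G
  have hone : Nat.card (Sylow p G) = 1 := by
    rcases (Nat.dvd_prime hq).mp
      (P.index_eq_of_card_eq_prime_mul_prime hq hpq.ne' hcard ▸ P.card_dvd_index) with h | h
    · exact h
    · rw [h, Nat.ModEq, Nat.mod_eq_of_lt hpq, Nat.mod_eq_of_lt hp.out.one_lt] at hmod
      exact absurd hmod hq.ne_one
  have : Subsingleton (Sylow p G) := (Nat.card_eq_one_iff_unique.mp hone).1
  exact P.normal_of_subsingleton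

theorem index_centralizer_of_card_eq_prime_mul_prime (hq : q.Prime) (hpq : p ≠ q)
    (hcard : Nat.card G = p * q) (hG : ¬ IsMulCommutative G) (P : Sylow p G)
    {g : G} (hg : g ∈ P) (hg1 : g ≠ 1) : (centralizer {g}).index = q := by
  have : IsCyclic P := isCyclic_of_prime_card (P.card_eq_of_card_eq_prime_mul_prime hq hpq hcard)
  have hle : (P : Subgroup G) ≤ centralizer {g} :=
    (le_centralizer (P : Subgroup G)).trans (centralizer_le (Set.singleton_subset_iff.mpr hg))
  rcases (Nat.dvd_prime hq).mp
    (P.index_eq_of_card_eq_prime_mul_prime hq hpq hcard ▸ index_dvd_of_le hle) with h | h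
  · refine absurd ?_ hg1
    rw [← mem_bot, ← center_eq_bot_of_card_eq_prime_mul_prime hp.out hq hcard hG]
    exact centralizer_eq_top_iff_subset.mp (index_eq_one.mp h) rfl
  · exact h

theorem ncc_of_card_eq_prime_mul_prime (hq : q.Prime) (hpq : q < p)
    (hcard : Nat.card G = p * q) (hG : ¬ IsMulCommutative G) (P : Sylow p G) :
    ncc (P : Subgroup G) = 1 + (p - 1) / q := by
  have h := (P.normal_of_card_eq_prime_mul_prime hq hpq hcard).nat_card_eq_one_add_ncc_sub_one_mul
    fun g hg hg1 => by
      rw [ConjClasses.nat_card_carrier_mk,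
        P.index_centralizer_of_card_eq_prime_mul_prime hq hpq.ne' hcard hG hg hg1]
  rw [P.card_eq_of_card_eq_prime_mul_prime hq hpq.ne' hcard] at h
  have hpos : ncc (P : Subgroup G) ≠ 0 := fun h0 => hp.out.ne_one (by simpa [h0] using h)
  rw [show p - 1 = (ncc (P : Subgroup G) - 1) * q by omega, Nat.mul_div_cancel _ hq.pos]
  omega

theorem eq_of_normal_of_card_eq_prime_mul_prime (hq : q.Prime) (hpq : q < p)
    (hcard : Nat.card G = p * q) (hG : ¬ IsMulCommutative G) (P : Sylow p G) {H : Subgroup G}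
    (hH : H.Normal) (hbot : H ≠ ⊥) (htop : H ≠ ⊤) : H = P := by
  have hPcard := P.card_eq_of_card_eq_prime_mul_prime hq hpq.ne' hcard
  rcases (Nat.dvd_prime_mul_prime hp.out hq).mp (hcard ▸ card_subgroup_dvd_card H)
    with h | h | h | h
  · exact absurd (card_eq_one.mp h) hbot
  · have hpgroup : IsPGroup p H := IsPGroup.of_card (n := 1) (by rw [h, pow_one])
    exact eq_of_le_of_card_ge (hpgroup.le_sylow_of_normal P) (by rw [h, hPcard])
  · have : IsCyclic H := isCyclic_of_prime_card (hp := ⟨hq⟩) h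
    have hcop : (Nat.card H).Coprime (Nat.card P) := by
      rw [h, hPcard]
      exact (Nat.coprime_primes hq hp.out).mpr hpq.ne
    have hcentral : H ≤ center G := le_center_of_normal_of_coprime hH
      (P.normal_of_card_eq_prime_mul_prime hq hpq hcard) hcop (by rw [h, hPcard, hcard, mul_comm])
    rw [center_eq_bot_of_card_eq_prime_mul_prime hp.out hq hcard hG] at hcentral
    exact absurd (le_bot_iff.mp hcentral) hbot
  · exact absurd (eq_top_of_card_eq _ (h.trans hcard.symm)) htop

end Sylow

end

/-- A non-abelian group of order `p * q` (`p`, `q` primes, `p > q`) has exactly one proper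
non-trivial normal subgroup `H`; this `H` is `(1 + (p-1)/q)`-decomposable, and `G` is
`{1, 1 + (p-1)/q}`-decomposable. -/
theorem pq_group_decomposable {G : Type*} [Group G] (p q : ℕ)
    (hp : p.Prime) (hq : q.Prime) (hpq : q < p)
    (hcard : Nat.card G = p * q) (hna : ¬ ∀ a b : G, a * b = b * a) :
    (∃! H : Subgroup G, H.Normal ∧ H ≠ ⊥ ∧ H ≠ ⊤) ∧
    (∀ H : Subgroup G, H.Normal → H ≠ ⊥ → H ≠ ⊤ → ncc H = 1 + (p - 1) / q) ∧
    XDecomposable G {1, 1 + (p - 1) / q} := by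
  have : Fact p.Prime := ⟨hp⟩
  have : Finite G := Nat.finite_of_card_ne_zero (hcard ▸ (Nat.mul_pos hp.pos hq.pos).ne')
  have hG : ¬ IsMulCommutative G := isMulCommutative_iff.not.mpr hna
  obtain ⟨P⟩ : Nonempty (Sylow p G) := inferInstance
  have hPnormal := P.normal_of_card_eq_prime_mul_prime hq hpq hcard
  have hPbot : (P : Subgroup G) ≠ ⊥ := fun h => hp.ne_one <| by
    rw [← P.card_eq_of_card_eq_prime_mul_prime hq hpq.ne' hcard, h, card_bot]
  have hPtop : (P : Subgroup G) ≠ ⊤ := fun h => hq.ne_one <| by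
    rw [← P.index_eq_of_card_eq_prime_mul_prime hq hpq.ne' hcard, h, index_top]
  have huniq : ∀ H : Subgroup G, H.Normal → H ≠ ⊥ → H ≠ ⊤ → H = P := fun _ =>
    P.eq_of_normal_of_card_eq_prime_mul_prime hq hpq hcard hG
  have hncc := P.ncc_of_card_eq_prime_mul_prime hq hpq hcard hG
  refine ⟨⟨P, ⟨hPnormal, hPbot, hPtop⟩, fun H ⟨hH, hbot, htop⟩ => huniq H hH hbot htop⟩,
    fun H hH hbot htop => huniq H hH hbot htop ▸ hncc, ?_⟩
  rw [XDecomposable, ← hncc]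
  refine KG_eq_pair_of_normal_eq_bot_or_eq hPnormal hPtop fun H hH htop => ?_
  by_cases hbot : H = ⊥
  · exact Or.inl hbot
  · exact Or.inr (huniq H hH hbot htop)
end

section
/- Let n ≥ 3 be odd and let D_{2n} = ⟨a, b | aⁿ = b² = 1, b⁻¹ab = a⁻¹⟩ be the dihedral group of order 2n. Then every proper normal subgroup of D_{2n} is contained in ⟨a⟩, and D_{2n} is X-decomposable for X = {(d+1)/2 : d a positive divisor of n}. -/
/-!
For odd `n`, conjugating a reflection `sr i` by `r j` gives `sr (i - 2 j)`, and `2` is a unit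
mod `n`, so a normal subgroup containing one reflection contains all of them, hence also every
rotation `sr 0 * sr k = r k`. A proper normal subgroup is therefore `{r i | i ∈ T}` for an additive
subgroup `T` of `ZMod n`, whose order `d` can be any divisor of `n`. Its conjugacy classes are the
sets `{r i, r (-i)}`, i.e. the orbits of `±1` on `T`; as only `0` is fixed by `-1`, Burnside's
lemma gives `2 * ncc = d + 1`.
-/

open MulAction

theorem mem_orbit_units_int_iff {A : Type*} [AddCommGroup A] {a b : A} :
    a ∈ orbit ℤˣ b ↔ a = b ∨ a = -b := by
  constructor
  · rintro ⟨u, rfl⟩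
    rcases Int.units_eq_one_or u with rfl | rfl <;> simp [Units.smul_def]
  · rintro (rfl | rfl)
    · exact mem_orbit_self _
    · exact ⟨-1, by simp [Units.smul_def]⟩

theorem two_mul_card_orbitRel_units_int {A : Type*} [AddCommGroup A] [Finite A]
    (h : ∀ a : A, -a = a → a = 0) :
    2 * Nat.card (orbitRel.Quotient ℤˣ A) = Nat.card A + 1 := by
  classical
  have := Fintype.ofFinite A
  have fixedBy_one : fixedBy A (1 : ℤˣ) = Set.univ := by ext; simp
  have fixedBy_neg_one : fixedBy A (-1 : ℤˣ) = {0} := by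
    ext a
    simp only [mem_fixedBy, Units.smul_def, Units.val_neg, Units.val_one, neg_smul, one_smul,
      Set.mem_singleton_iff]
    exact ⟨h a, fun ha => by simp [ha]⟩
  have burnside := sum_card_fixedBy_eq_card_orbits_mul_card_group ℤˣ A
  rw [show (Finset.univ : Finset ℤˣ) = {1, -1} by decide, Finset.sum_pair (by decide),
    Fintype.card_units_int] at burnside
  simp only [← Nat.card_eq_fintype_card, fixedBy_one, fixedBy_neg_one, Nat.card_univ,
    Nat.card_unique] at burnside
  exact (mul_comm _ _).trans burnside.symm

namespace ZMod

variable {n : ℕ}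

theorem isUnit_two_of_odd (hodd : Odd n) : IsUnit (2 : ZMod n) := by
  simpa using (isUnit_iff_coprime 2 n).2 (Nat.coprime_two_left.2 hodd)

theorem eq_zero_of_neg_eq_self_of_odd (hodd : Odd n) {a : ZMod n} (h : -a = a) : a = 0 := by
  obtain ⟨k, rfl⟩ := hodd
  exact ((neg_eq_self_iff a).1 h).resolve_right (by omega)

theorem exists_addSubgroup_card_eq [NeZero n] {d : ℕ} (hd : d ∣ n) :
    ∃ T : AddSubgroup (ZMod n), Nat.card T = d := by
  refine ⟨AddSubgroup.zmultiples ((n / d : ℕ) : ZMod n), ?_⟩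
  rw [Nat.card_zmultiples, addOrderOf_coe _ (NeZero.ne n),
    Nat.gcd_eq_right (Nat.div_dvd_of_dvd hd), Nat.div_div_self hd (NeZero.ne n)]

end ZMod

namespace DihedralGroup

variable {n : ℕ}

theorem isConj_r_iff (i : ZMod n) (x : DihedralGroup n) :
    IsConj (r i) x ↔ x = r i ∨ x = r (-i) := by
  constructor
  · rw [isConj_iff]
    rintro ⟨g | g, rfl⟩ <;> simp only [r_mul_r, sr_mul_r, sr_mul_sr, inv_r, inv_sr, r.injEq]
    · exact .inl (by abel)
    · exact .inr (by abel)
  · rintro (rfl | rfl)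
    · exact IsConj.refl _
    · exact isConj_iff.2 ⟨sr 0, by simp [inv_sr]⟩

def rotations (T : AddSubgroup (ZMod n)) : Subgroup (DihedralGroup n) where
  carrier := {x | ∃ i ∈ T, x = r i}
  one_mem' := ⟨0, T.zero_mem, rfl⟩
  mul_mem' := by
    rintro _ _ ⟨i, hi, rfl⟩ ⟨j, hj, rfl⟩
    exact ⟨i + j, T.add_mem hi hj, rfl⟩
  inv_mem' := by
    rintro _ ⟨i, hi, rfl⟩
    exact ⟨-i, T.neg_mem hi, rfl⟩

variable {T : AddSubgroup (ZMod n)}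

theorem mem_rotations {x : DihedralGroup n} : x ∈ rotations T ↔ ∃ i ∈ T, x = r i := Iff.rfl

theorem r_mem_rotations {i : ZMod n} : r i ∈ rotations T ↔ i ∈ T :=
  ⟨fun ⟨_, hj, hij⟩ => r.inj hij ▸ hj, fun hi => ⟨i, hi, rfl⟩⟩

theorem conjClass_r_subset_rotations {i : ZMod n} (hi : i ∈ T) :
    (ConjClasses.mk (r i)).carrier ⊆ rotations T := by
  intro x hx
  rw [ConjClasses.mem_carrier_iff_mk_eq, ConjClasses.mk_eq_mk_iff_isConj, isConj_comm,
    isConj_r_iff] at hx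
  rcases hx with rfl | rfl
  · exact r_mem_rotations.2 hi
  · exact r_mem_rotations.2 (T.neg_mem hi)

theorem rotations_normal (T : AddSubgroup (ZMod n)) : (rotations T).Normal := by
  refine ⟨fun _ ⟨_, hi, hx⟩ g => hx ▸ conjClass_r_subset_rotations hi ?_⟩
  rw [ConjClasses.mem_carrier_iff_mk_eq, ConjClasses.mk_eq_mk_iff_isConj]
  exact (isConj_iff.2 ⟨g, rfl⟩).symm

theorem rotations_ne_top (T : AddSubgroup (ZMod n)) : rotations T ≠ ⊤ := fun h => by
  obtain ⟨_, -, h0⟩ := mem_rotations.1 (h ▸ Subgroup.mem_top (sr 0 : DihedralGroup n))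
  nomatch h0

theorem rotations_le_zpowers_r_one [NeZero n] (T : AddSubgroup (ZMod n)) :
    rotations T ≤ Subgroup.zpowers (r 1) := by
  rintro _ ⟨i, -, rfl⟩
  exact Subgroup.mem_zpowers_iff.2 ⟨i.val, by rw [zpow_natCast, r_one_pow, ZMod.natCast_zmod_val]⟩

theorem two_mul_ncc_rotations (hodd : Odd n) (T : AddSubgroup (ZMod n)) :
    2 * ncc (rotations T) = Nat.card T + 1 := by
  have : NeZero n := ⟨hodd.pos.ne'⟩
  let f : T → {c : ConjClasses (DihedralGroup n) // c.carrier ⊆ rotations T} :=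
    fun i => ⟨ConjClasses.mk (r i), conjClass_r_subset_rotations i.2⟩
  have hf : Function.Surjective f := by
    rintro ⟨c, hc⟩
    obtain ⟨x, rfl⟩ := c.exists_rep
    obtain ⟨i, hi, rfl⟩ := hc ConjClasses.mem_carrier_mk
    exact ⟨⟨i, hi⟩, rfl⟩
  have hker : Setoid.ker f = orbitRel ℤˣ T := by
    ext i j
    rw [Setoid.ker_def, orbitRel_apply, mem_orbit_units_int_iff]
    simp only [f, ConjClasses.mk_eq_mk_iff_isConj, isConj_r_iff, r.injEq,
      Subtype.ext_iff, NegMemClass.coe_neg, eq_comm (a := j.1), ← neg_eq_iff_eq_neg]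
  have hncc : ncc (rotations T) = Nat.card (orbitRel.Quotient ℤˣ T) :=
    Nat.card_congr (hker ▸ Setoid.quotientKerEquivOfSurjective f hf).symm
  rw [hncc]
  exact two_mul_card_orbitRel_units_int fun i hi =>
    Subtype.ext (ZMod.eq_zero_of_neg_eq_self_of_odd hodd (congrArg Subtype.val hi))

theorem eq_top_of_sr_mem (hodd : Odd n) {H : Subgroup (DihedralGroup n)} (hH : H.Normal)
    {i : ZMod n} (hi : sr i ∈ H) : H = ⊤ := by
  have hsr : ∀ k, sr k ∈ H := by
    intro k
    obtain ⟨u, hu⟩ := ZMod.isUnit_two_of_odd hodd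
    have hk : i - 2 * (↑u⁻¹ * (i - k)) = k := by
      rw [← hu, Units.mul_inv_cancel_left, sub_sub_cancel]
    have hconj := hH.conj_mem _ hi (r (↑u⁻¹ * (i - k)))
    rwa [inv_r, r_mul_sr, sr_mul_r, ← sub_eq_add_neg, sub_sub, ← two_mul, hk] at hconj
  refine (Subgroup.eq_top_iff' H).2 ?_
  rintro (k | k)
  · simpa [sr_mul_sr] using H.mul_mem (hsr 0) (hsr k)
  · exact hsr k

theorem exists_eq_rotations_of_normal (hodd : Odd n) {H : Subgroup (DihedralGroup n)}
    (hH : H.Normal) (hne : H ≠ ⊤) : ∃ T : AddSubgroup (ZMod n), H = rotations T := by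
  refine ⟨{ carrier := {i | r i ∈ H}
            zero_mem' := H.one_mem
            add_mem' := fun ha hb => by simpa [r_mul_r] using H.mul_mem ha hb
            neg_mem' := fun ha => by simpa [inv_r] using H.inv_mem ha }, ?_⟩
  ext (i | i)
  · exact ⟨fun hi => ⟨i, hi, rfl⟩, fun hi => r_mem_rotations.1 hi⟩
  · refine iff_of_false (fun hi => hne (eq_top_of_sr_mem hodd hH hi)) ?_
    rintro ⟨_, -, h⟩
    nomatch h

end DihedralGroup

open DihedralGroup in
theorem dihedral_odd_decomposable_general (n : ℕ) (hodd : Odd n) :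
    (∀ H : Subgroup (DihedralGroup n), H.Normal → H ≠ ⊤ →
      H ≤ Subgroup.zpowers (DihedralGroup.r (1 : ZMod n))) ∧
    XDecomposable (DihedralGroup n) {m : ℕ | ∃ d : ℕ, d ∣ n ∧ m = (d + 1) / 2} := by
  have : NeZero n := ⟨hodd.pos.ne'⟩
  refine ⟨fun H hH hne => ?_, Set.ext fun m => ⟨?_, ?_⟩⟩
  · obtain ⟨T, rfl⟩ := exists_eq_rotations_of_normal hodd hH hne
    exact rotations_le_zpowers_r_one T
  · rintro ⟨H, hH, hne, rfl⟩
    obtain ⟨T, rfl⟩ := exists_eq_rotations_of_normal hodd hH hne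
    refine ⟨Nat.card T, ?_, by have := two_mul_ncc_rotations hodd T; omega⟩
    simpa using AddSubgroup.card_addSubgroup_dvd_card T
  · rintro ⟨d, hd, rfl⟩
    obtain ⟨T, hT⟩ := ZMod.exists_addSubgroup_card_eq hd
    refine ⟨rotations T, rotations_normal T, rotations_ne_top T, ?_⟩
    have := two_mul_ncc_rotations hodd T
    omega

/-- For odd `n ≥ 3`, every proper normal subgroup of the dihedral group `D_{2n}` is contained
in `⟨a⟩`, and `D_{2n}` is `X`-decomposable for `X = {(d+1)/2 : d ∣ n}`. -/
theorem dihedral_odd_decomposable (n : ℕ) (hn : 3 ≤ n) (hodd : Odd n) :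
    (∀ H : Subgroup (DihedralGroup n), H.Normal → H ≠ ⊤ →
      H ≤ Subgroup.zpowers (DihedralGroup.r (1 : ZMod n))) ∧
    XDecomposable (DihedralGroup n) {m : ℕ | ∃ d : ℕ, d ∣ n ∧ m = (d + 1) / 2} :=
  dihedral_odd_decomposable_general n hodd
end

section
/- Let n ≥ 4 be even and let D_{2n} = ⟨a, b | aⁿ = b² = 1, b⁻¹ab = a⁻¹⟩ be the dihedral group of order 2n. The only proper normal subgroups of D_{2n} not contained in ⟨a⟩ are H = ⟨a², b⟩ and K = ⟨a², ab⟩; moreover ncc(H) = ncc(K), and this common value is n/4 + 2 if 4 divides n, and (n+6)/4 if 4 does not divide n. -/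
namespace DihedralAux

open DihedralGroup Subgroup

variable {n : ℕ}

/-- the parity ring hom `ZMod n → ZMod 2`. -/
def cc (h2 : (2:ℕ) ∣ n) : ZMod n →+* ZMod 2 := ZMod.castHom h2 (ZMod 2)

lemma cc_natCast (h2 : (2:ℕ) ∣ n) (k : ℕ) : cc h2 (k : ZMod n) = (k : ZMod 2) :=
  map_natCast _ k

lemma cc_eq_zero_iff (h2 : (2:ℕ) ∣ n) [NeZero n] (i : ZMod n) :
    cc h2 i = 0 ↔ 2 ∣ i.val := by
  rw [cc, ZMod.castHom_apply, ← ZMod.natCast_val, ZMod.natCast_eq_zero_iff]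

lemma exists_two_mul (h2 : (2:ℕ) ∣ n) [NeZero n] {i : ZMod n} (h : cc h2 i = 0) :
    ∃ j : ZMod n, i = 2 * j := by
  rw [cc_eq_zero_iff] at h
  obtain ⟨m, hm⟩ := h
  refine ⟨(m : ZMod n), ?_⟩
  have := ZMod.natCast_zmod_val i
  rw [← this, hm]
  push_cast
  ring

lemma cc_two_mul (h2 : (2:ℕ) ∣ n) (j : ZMod n) : cc h2 (2 * j) = 0 := by
  have h4 : (2 : ZMod n) = ((2:ℕ) : ZMod n) := by push_cast; ring
  rw [map_mul, h4, cc_natCast]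
  have : ((2:ℕ) : ZMod 2) = 0 := by decide
  rw [this, zero_mul]

/-- the parity homomorphism on the dihedral group; `e = 0` gives `H`, `e = 1` gives `K`. -/
def dh (h2 : (2:ℕ) ∣ n) (e : ZMod 2) : DihedralGroup n →* Multiplicative (ZMod 2) where
  toFun x := Multiplicative.ofAdd (match x with | r i => cc h2 i | sr i => cc h2 i + e)
  map_one' := by
    show Multiplicative.ofAdd (cc h2 0) = 1
    rw [map_zero]; rfl
  map_mul' x y := by
    rcases x with i | i <;> rcases y with j | j
    · show Multiplicative.ofAdd (cc h2 (i + j)) =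
        Multiplicative.ofAdd (cc h2 i) * Multiplicative.ofAdd (cc h2 j)
      rw [← ofAdd_add]
      exact congrArg _ (map_add (cc h2) i j)
    · show Multiplicative.ofAdd (cc h2 (j - i) + e) =
        Multiplicative.ofAdd (cc h2 i) * Multiplicative.ofAdd (cc h2 j + e)
      rw [← ofAdd_add]
      congr 1
      rw [map_sub (cc h2) j i]
      generalize cc h2 i = p; generalize cc h2 j = q
      revert p q e; decide
    · show Multiplicative.ofAdd (cc h2 (i + j) + e) =
        Multiplicative.ofAdd (cc h2 i + e) * Multiplicative.ofAdd (cc h2 j)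
      rw [← ofAdd_add]
      congr 1
      rw [map_add (cc h2) i j]
      generalize cc h2 i = p; generalize cc h2 j = q
      revert p q e; decide
    · show Multiplicative.ofAdd (cc h2 (j - i)) =
        Multiplicative.ofAdd (cc h2 i + e) * Multiplicative.ofAdd (cc h2 j + e)
      rw [← ofAdd_add]
      congr 1
      rw [map_sub (cc h2) j i]
      generalize cc h2 i = p; generalize cc h2 j = q
      revert p q e; decide

lemma dh_r (h2 : (2:ℕ) ∣ n) (e : ZMod 2) (i : ZMod n) :
    dh h2 e (r i) = Multiplicative.ofAdd (cc h2 i) := rfl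

lemma dh_sr (h2 : (2:ℕ) ∣ n) (e : ZMod 2) (i : ZMod n) :
    dh h2 e (sr i) = Multiplicative.ofAdd (cc h2 i + e) := rfl

lemma mem_ker_r (h2 : (2:ℕ) ∣ n) (e : ZMod 2) (i : ZMod n) :
    r i ∈ (dh h2 e).ker ↔ cc h2 i = 0 := by
  rw [MonoidHom.mem_ker, dh_r, ← ofAdd_zero, Multiplicative.ofAdd.apply_eq_iff_eq]

lemma mem_ker_sr (h2 : (2:ℕ) ∣ n) (e : ZMod 2) (i : ZMod n) :
    sr i ∈ (dh h2 e).ker ↔ cc h2 i = e := by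
  have key : ∀ p e : ZMod 2, p + e = 0 ↔ p = e := by decide
  rw [MonoidHom.mem_ker, dh_sr, ← ofAdd_zero, Multiplicative.ofAdd.apply_eq_iff_eq]
  exact key _ _



lemma inv_r (i : ZMod n) : (r i)⁻¹ = r (-i) := rfl
lemma inv_sr (i : ZMod n) : (sr i)⁻¹ = sr i := rfl

lemma ker_ne_top (h2 : (2:ℕ) ∣ n) (e : ZMod 2) : (dh h2 e).ker ≠ ⊤ := by
  intro h
  have : r (1 : ZMod n) ∈ (dh h2 e).ker := h ▸ Subgroup.mem_top _
  rw [mem_ker_r, map_one] at this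
  exact absurd this (by decide)

lemma r_mem_of_even [NeZero n] (h2 : (2:ℕ) ∣ n) {A : Subgroup (DihedralGroup n)}
    (hA : (r 1 : DihedralGroup n) ^ 2 ∈ A) {i : ZMod n} (hi : cc h2 i = 0) : r i ∈ A := by
  obtain ⟨m, hm⟩ := (cc_eq_zero_iff h2 i).mp hi
  have h1 : r i = ((r 1 : DihedralGroup n) ^ 2) ^ m := by
    rw [← pow_mul, r_one_pow]
    congr 1
    rw [← ZMod.natCast_zmod_val i, hm]
  rw [h1]
  exact pow_mem hA m

lemma closure_eq_ker0 [NeZero n] (h2 : (2:ℕ) ∣ n) :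
    closure {(r 1 : DihedralGroup n) ^ 2, sr 0} = (dh h2 0).ker := by
  apply le_antisymm
  · rw [closure_le]
    rintro x (rfl | rfl)
    · rw [SetLike.mem_coe, r_one_pow, mem_ker_r, cc_natCast]
      decide
    · rw [SetLike.mem_coe, mem_ker_sr, map_zero]
  · intro x hx
    rcases x with i | i
    · rw [mem_ker_r] at hx
      exact r_mem_of_even h2 (subset_closure (Set.mem_insert _ _)) hx
    · rw [mem_ker_sr] at hx
      have h1 : sr i = sr 0 * r i := by rw [sr_mul_r, zero_add]
      rw [h1]
      exact mul_mem (subset_closure (Set.mem_insert_of_mem _ rfl))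
        (r_mem_of_even h2 (subset_closure (Set.mem_insert _ _)) hx)

lemma closure_eq_ker1 [NeZero n] (h2 : (2:ℕ) ∣ n) :
    closure {(r 1 : DihedralGroup n) ^ 2, r 1 * sr 0} = (dh h2 1).ker := by
  have hgen : (r 1 * sr 0 : DihedralGroup n) = sr (-1) := by
    rw [r_mul_sr, zero_sub]
  apply le_antisymm
  · rw [closure_le]
    rintro x (rfl | rfl)
    · rw [SetLike.mem_coe, r_one_pow, mem_ker_r, cc_natCast]
      decide
    · rw [SetLike.mem_coe, hgen, mem_ker_sr, map_neg, map_one]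
      decide
  · intro x hx
    rcases x with i | i
    · rw [mem_ker_r] at hx
      exact r_mem_of_even h2 (subset_closure (Set.mem_insert _ _)) hx
    · rw [mem_ker_sr] at hx
      have h0 : cc h2 (i + 1) = 0 := by
        rw [map_add, map_one, hx]; decide
      have h1 : sr i = (r 1 * sr 0) * r (i + 1) := by
        rw [hgen, sr_mul_r]
        congr 1
        ring
      rw [h1]
      exact mul_mem (subset_closure (Set.mem_insert_of_mem _ rfl))
        (r_mem_of_even h2 (subset_closure (Set.mem_insert _ _)) h0)

lemma r_mem_zpowers [NeZero n] (j : ZMod n) :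
    r j ∈ zpowers (r (1 : ZMod n)) := by
  refine Subgroup.mem_zpowers_iff.mpr ⟨(j.val : ℤ), ?_⟩
  rw [zpow_natCast, r_one_pow, ZMod.natCast_zmod_val]

lemma classify [NeZero n] (h2 : (2:ℕ) ∣ n) (N : Subgroup (DihedralGroup n)) (hN : N.Normal)
    (hne : N ≠ ⊤) (hnle : ¬ N ≤ zpowers (r (1 : ZMod n))) :
    N = (dh h2 0).ker ∨ N = (dh h2 1).ker := by
  obtain ⟨x, hxN, hx⟩ := SetLike.not_le_iff_exists.mp hnle
  obtain ⟨i, rfl⟩ : ∃ i, x = sr i := by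
    rcases x with j | j
    · exact absurd (r_mem_zpowers j) hx
    · exact ⟨j, rfl⟩
  have hsrall : ∀ j : ZMod n, sr (i - 2*j) ∈ N := by
    intro j
    have h1 := hN.conj_mem _ hxN (r j)
    have h2' : r j * sr i * (r j)⁻¹ = sr (i - 2*j) := by
      rw [inv_r, r_mul_sr, sr_mul_r]
      congr 1
      ring
    rwa [h2'] at h1
  have hrot : ∀ j : ZMod n, r (2*j) ∈ N := by
    intro j
    have h1 := N.mul_mem (hsrall j) hxN
    have h2' : sr (i - 2*j) * sr i = r (2*j) := by
      rw [sr_mul_sr]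
      congr 1
      ring
    rwa [h2'] at h1
  have hreven : ∀ t : ZMod n, cc h2 t = 0 → r t ∈ N := by
    intro t ht
    obtain ⟨j, rfl⟩ := exists_two_mul h2 ht
    exact hrot j
  have htop : ∀ t : ZMod n, cc h2 t = 1 → r t ∈ N → False := by
    intro t ht hrt
    apply hne
    have hr1 : r (1 : ZMod n) ∈ N := by
      have h10 : cc h2 (1 - t) = 0 := by
        rw [map_sub, map_one, ht]; decide
      have h1 := N.mul_mem hrt (hreven _ h10)
      have h2' : r t * r (1 - t) = r (1 : ZMod n) := by
        rw [r_mul_r]; congr 1; ring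
      rwa [h2'] at h1
    have hrall : ∀ k : ZMod n, r k ∈ N := by
      intro k
      have h1 : r (1 : ZMod n) ^ k.val ∈ N := pow_mem hr1 _
      rwa [r_one_pow, ZMod.natCast_zmod_val] at h1
    rw [eq_top_iff']
    intro y
    rcases y with k | k
    · exact hrall k
    · have h1 := N.mul_mem hxN (hrall (k - i))
      have h2' : sr i * r (k - i) = sr k := by
        rw [sr_mul_r]; congr 1; ring
      rwa [h2'] at h1
  have key : N = (dh h2 (cc h2 i)).ker := by
    apply le_antisymm
    · intro y hy
      rcases y with t | t
      · rw [mem_ker_r]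
        by_contra h
        have h1 : cc h2 t = 1 :=
          (show ∀ p : ZMod 2, ¬ p = 0 → p = 1 by decide) _ h
        exact htop t h1 hy
      · rw [mem_ker_sr]
        by_contra h
        have h1 : cc h2 (t - i) = 1 := by
          rw [map_sub]
          exact (show ∀ p q : ZMod 2, ¬ p = q → p - q = 1 by decide) _ _ h
        have h2' := N.mul_mem hxN hy
        rw [sr_mul_sr] at h2'
        exact htop _ h1 h2'
    · intro y hy
      rcases y with t | t
      · rw [mem_ker_r] at hy
        exact hreven t hy
      · rw [mem_ker_sr] at hy
        have h0 : cc h2 (i - t) = 0 := by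
          rw [map_sub, hy, sub_self]
        obtain ⟨j, hj⟩ := exists_two_mul h2 h0
        have ht : t = i - 2*j := by
          rw [← hj]; ring
        rw [ht]
        exact hsrall j
  rcases (show ∀ p : ZMod 2, p = 0 ∨ p = 1 by decide) (cc h2 i) with h | h
  · left; rw [key, h]
  · right; rw [key, h]

lemma conj_sr' (j i : ZMod n) : r j * sr i * (r j)⁻¹ = sr (i - 2*j) := by
  rw [inv_r, r_mul_sr, sr_mul_r]
  congr 1
  ring

lemma conj_r_cases (g : DihedralGroup n) (i : ZMod n) :
    g * r i * g⁻¹ = r i ∨ g * r i * g⁻¹ = r (-i) := by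
  rcases g with j | j
  · left
    rw [inv_r, r_mul_r, r_mul_r]
    congr 1
    ring
  · right
    rw [inv_sr, sr_mul_r, sr_mul_sr]
    congr 1
    ring

lemma isConj_r {i : ZMod n} {x : DihedralGroup n} (h : IsConj (r i) x) :
    x = r i ∨ x = r (-i) := by
  obtain ⟨g, hg⟩ := isConj_iff.mp h
  rcases conj_r_cases g i with h' | h'
  · left; rw [← hg, h']
  · right; rw [← hg, h']

lemma carrier_subset {G : Type*} [Group G] {A : Subgroup G} (hA : A.Normal) {x : G}
    (hx : x ∈ A) : (ConjClasses.mk x).carrier ⊆ (A : Set G) := by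
  intro y hy
  rw [ConjClasses.mem_carrier_iff_mk_eq, eq_comm, ConjClasses.mk_eq_mk_iff_isConj] at hy
  obtain ⟨g, hg⟩ := isConj_iff.mp hy
  rw [← hg]
  exact hA.conj_mem x hx g

lemma card_evens (N : ℕ) :
    ((Finset.range N).filter (fun k => Even k)).card = (N+1)/2 := by
  induction N with
  | zero => simp
  | succ N ih =>
    rw [Finset.range_add_one, Finset.filter_insert]
    by_cases h : Even N
    · rw [if_pos h, Finset.card_insert_of_notMem (by simp), ih]
      rw [Nat.even_iff] at h
      omega
    · rw [if_neg h, ih]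
      rw [Nat.not_even_iff] at h
      omega

lemma ncc_eq [NeZero n] (h2 : (2:ℕ) ∣ n) (hn : 4 ≤ n) (A : Subgroup (DihedralGroup n))
    (hA : A.Normal) (w : ZMod n)
    (hr : ∀ i : ZMod n, r i ∈ A ↔ cc h2 i = 0)
    (hs : ∀ i : ZMod n, sr i ∈ A ↔ cc h2 i = cc h2 w) :
    ncc A = (n/2+2)/2 + 1 := by
  classical
  set F : Finset (ConjClasses (DihedralGroup n)) :=
    insert (ConjClasses.mk (sr w))
      (((Finset.range (n/2+1)).filter (fun k => Even k)).image
        (fun k : ℕ => ConjClasses.mk (r (k : ZMod n)))) with hF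
  have set_eq : {c : ConjClasses (DihedralGroup n) | c.carrier ⊆ (A : Set _)} = ↑F := by
    ext c
    constructor
    · intro hc
      obtain ⟨x, rfl⟩ := ConjClasses.exists_rep c
      have hxa : x ∈ A := hc (ConjClasses.mem_carrier_iff_mk_eq.mpr rfl)
      rcases x with i | i
      · have hi : cc h2 i = 0 := (hr i).mp hxa
        have hdvd : 2 ∣ i.val := (cc_eq_zero_iff h2 i).mp hi
        have hlt : i.val < n := ZMod.val_lt i
        simp only [hF, Finset.coe_insert, Set.mem_insert_iff, Finset.coe_image,
          Set.mem_image, Finset.mem_coe, Finset.mem_filter, Finset.mem_range]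
        right
        by_cases hhalf : i.val ≤ n / 2
        · exact ⟨i.val, ⟨by omega, by rw [Nat.even_iff]; omega⟩,
            by rw [ZMod.natCast_zmod_val]⟩
        · refine ⟨n - i.val, ⟨by omega, by rw [Nat.even_iff]; omega⟩, ?_⟩
          have hcast : ((n - i.val : ℕ) : ZMod n) = -i := by
            rw [Nat.cast_sub (le_of_lt hlt), ZMod.natCast_self, ZMod.natCast_zmod_val]
            ring
          rw [hcast, ConjClasses.mk_eq_mk_iff_isConj]
          apply isConj_iff.mpr ⟨sr 0, ?_⟩
          rw [inv_sr, sr_mul_r, sr_mul_sr]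
          congr 1
          ring
      · have hi : cc h2 i = cc h2 w := (hs i).mp hxa
        have h0 : cc h2 (i - w) = 0 := by rw [map_sub, hi, sub_self]
        obtain ⟨j, hj⟩ := exists_two_mul h2 h0
        simp only [hF, Finset.coe_insert, Set.mem_insert_iff]
        left
        rw [ConjClasses.mk_eq_mk_iff_isConj]
        apply isConj_iff.mpr ⟨r j, ?_⟩
        rw [conj_sr', ← hj]
        congr 1
        ring
    · intro hc
      simp only [hF, Finset.coe_insert, Set.mem_insert_iff, Finset.coe_image,
        Set.mem_image, Finset.mem_coe, Finset.mem_filter, Finset.mem_range] at hc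
      rcases hc with rfl | ⟨k, ⟨_, hk⟩, rfl⟩
      · exact carrier_subset hA ((hs w).mpr rfl)
      · apply carrier_subset hA
        rw [hr, cc_natCast]
        exact (ZMod.natCast_eq_zero_iff k 2).mpr hk.two_dvd
  have hnotmem : ConjClasses.mk (sr w) ∉
      ((Finset.range (n/2+1)).filter (fun k => Even k)).image
        (fun k : ℕ => ConjClasses.mk (r (k : ZMod n))) := by
    simp only [Finset.mem_image, Finset.mem_filter, Finset.mem_range]
    rintro ⟨k, -, hk⟩
    rw [ConjClasses.mk_eq_mk_iff_isConj] at hk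
    rcases isConj_r hk with h | h <;> exact absurd h (by simp)
  have hinj : Set.InjOn (fun k : ℕ => ConjClasses.mk (r (k : ZMod n)))
      ↑((Finset.range (n/2+1)).filter (fun k => Even k)) := by
    intro k hk l hl hkl
    simp only [Finset.coe_filter, Finset.mem_range, Set.mem_setOf_eq] at hk hl
    have hkn : k < n := by omega
    have hln : l < n := by omega
    simp only at hkl
    rw [ConjClasses.mk_eq_mk_iff_isConj] at hkl
    rcases isConj_r hkl with h | h
    · have h1 : (l : ZMod n) = (k : ZMod n) := r.inj h
      have h2' := congrArg ZMod.val h1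
      rw [ZMod.val_natCast_of_lt hln, ZMod.val_natCast_of_lt hkn] at h2'
      omega
    · have h1 : (l : ZMod n) = -(k : ZMod n) := r.inj h
      have h3 : ((l + k : ℕ) : ZMod n) = 0 := by
        push_cast
        rw [h1]
        ring
      rw [ZMod.natCast_eq_zero_iff] at h3
      by_cases h0 : l + k = 0
      · omega
      · have hle := Nat.le_of_dvd (Nat.pos_of_ne_zero h0) h3
        obtain ⟨m, hm⟩ := h2
        omega
  have hcard : F.card = (n/2+2)/2 + 1 := by
    rw [hF, Finset.card_insert_of_notMem hnotmem, Finset.card_image_of_injOn hinj, card_evens]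
  have h1 : ncc A = {c : ConjClasses (DihedralGroup n) | c.carrier ⊆ (A : Set _)}.ncard :=
    Nat.card_coe_set_eq _
  rw [h1, set_eq, Set.ncard_coe_finset, hcard]

end DihedralAux

/-- For even `n ≥ 4`, the only proper normal subgroups of `D_{2n}` not contained in `⟨a⟩`
are `H = ⟨a², b⟩` and `K = ⟨a², ab⟩`; moreover `ncc H = ncc K`, and this common value is
`n/4 + 2` if `4 ∣ n` and `(n+6)/4` otherwise. -/
theorem dihedral_even_extra_normal_subgroups (n : ℕ) (hn : 4 ≤ n) (heven : Even n) :
    ∀ a b : DihedralGroup n, a = DihedralGroup.r (1 : ZMod n) → b = DihedralGroup.sr (0 : ZMod n) →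
    ∀ H K : Subgroup (DihedralGroup n),
      H = Subgroup.closure {a ^ 2, b} → K = Subgroup.closure {a ^ 2, a * b} →
    (H.Normal ∧ H ≠ ⊤ ∧ K.Normal ∧ K ≠ ⊤) ∧
    (∀ N : Subgroup (DihedralGroup n), N.Normal → N ≠ ⊤ →
      ¬ N ≤ Subgroup.zpowers a → N = H ∨ N = K) ∧
    ncc H = ncc K ∧
    (4 ∣ n → ncc H = n / 4 + 2) ∧
    (¬ 4 ∣ n → ncc H = (n + 6) / 4) := by
  intro a b ha hb H K hH hK
  subst ha hb hH hK
  have h2 : (2:ℕ) ∣ n := heven.two_dvd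
  have : NeZero n := ⟨by omega⟩
  have hH' : Subgroup.closure {DihedralGroup.r (1 : ZMod n) ^ 2, DihedralGroup.sr 0} =
      (DihedralAux.dh h2 0).ker := DihedralAux.closure_eq_ker0 h2
  have hK' : Subgroup.closure {DihedralGroup.r (1 : ZMod n) ^ 2,
      DihedralGroup.r 1 * DihedralGroup.sr 0} =
      (DihedralAux.dh h2 1).ker := DihedralAux.closure_eq_ker1 h2
  rw [hH', hK']
  have e0 : ncc (DihedralAux.dh h2 0).ker = (n/2+2)/2 + 1 := by
    refine DihedralAux.ncc_eq h2 hn _ ((DihedralAux.dh h2 0).normal_ker) 0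
      (fun i => DihedralAux.mem_ker_r h2 0 i) (fun i => ?_)
    rw [DihedralAux.mem_ker_sr h2 0 i, map_zero]
  have e1 : ncc (DihedralAux.dh h2 1).ker = (n/2+2)/2 + 1 := by
    refine DihedralAux.ncc_eq h2 hn _ ((DihedralAux.dh h2 1).normal_ker) 1
      (fun i => DihedralAux.mem_ker_r h2 1 i) (fun i => ?_)
    rw [DihedralAux.mem_ker_sr h2 1 i, map_one]
  refine ⟨⟨(DihedralAux.dh h2 0).normal_ker, DihedralAux.ker_ne_top h2 0,
      (DihedralAux.dh h2 1).normal_ker, DihedralAux.ker_ne_top h2 1⟩,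
    fun N hN hne hnle => DihedralAux.classify h2 N hN hne hnle, by rw [e0, e1], ?_, ?_⟩
  · intro h4
    rw [e0]
    omega
  · intro h4
    rw [e0]
    omega
end

section
/- Let n ≥ 4 with 4 | n and let D_{2n} be the dihedral group of order 2n. Set Y = {(d+1)/2 : d | n, d odd} ∪ {(d+2)/2 : d | n, d even}. Then D_{2n} is A-decomposable, where A = Y ∪ {n/4 + 2}. -/
open DihedralGroup

namespace DihedralNcc

variable {n : ℕ}

lemma r_inv (i : ZMod n) : (r i)⁻¹ = r (-i) := rfl
lemma sr_inv (i : ZMod n) : (sr i)⁻¹ = sr i := rfl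

lemma isConj_r_iff (i : ZMod n) (g : DihedralGroup n) :
    IsConj (r i) g ↔ g = r i ∨ g = r (-i) := by
  rw [isConj_iff]
  constructor
  · rintro ⟨c, hc⟩
    rw [mul_inv_eq_iff_eq_mul] at hc
    rcases c with j | j <;> rcases g with k | k <;> simp only [r_mul_r, r_mul_sr,
      sr_mul_r, sr_mul_sr, r.injEq, sr.injEq, reduceCtorEq] at hc <;> try exact absurd hc (by simp)
    · left; rw [show k = i by linear_combination -hc]
    · right; rw [show k = -i by linear_combination hc]
  · rintro (rfl | rfl)
    · exact ⟨1, by simp⟩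
    · refine ⟨sr 0, ?_⟩
      rw [mul_inv_eq_iff_eq_mul]
      simp

lemma isConj_sr_iff (i : ZMod n) (g : DihedralGroup n) :
    IsConj (sr i) g ↔ ∃ j : ZMod n, g = sr (i + 2 * j) := by
  rw [isConj_iff]
  constructor
  · rintro ⟨c, hc⟩
    rw [mul_inv_eq_iff_eq_mul] at hc
    rcases c with j | j <;> rcases g with k | k <;> simp only [r_mul_r, r_mul_sr,
      sr_mul_r, sr_mul_sr, r.injEq, sr.injEq, reduceCtorEq] at hc
    · exact ⟨-j, by rw [sr.injEq]; linear_combination -hc⟩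
    · exact ⟨j - i, by rw [sr.injEq]; linear_combination hc⟩
  · rintro ⟨j, rfl⟩
    refine ⟨r (-j), ?_⟩
    rw [mul_inv_eq_iff_eq_mul]
    simp only [r_mul_sr, sr_mul_r, sr.injEq]
    ring

lemma carrier_mk_r (i : ZMod n) :
    (ConjClasses.mk (r i)).carrier = {r i, r (-i)} := by
  ext x
  rw [ConjClasses.mem_carrier_iff_mk_eq, eq_comm, ConjClasses.mk_eq_mk_iff_isConj,
    isConj_r_iff]
  simp [Set.mem_insert_iff]

lemma carrier_mk_sr (i : ZMod n) :
    (ConjClasses.mk (sr i)).carrier = {x | ∃ j : ZMod n, x = sr (i + 2 * j)} := by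
  ext x
  rw [ConjClasses.mem_carrier_iff_mk_eq, eq_comm, ConjClasses.mk_eq_mk_iff_isConj,
    isConj_sr_iff]
  rfl

lemma mk_r_eq_mk_r_iff (i j : ZMod n) :
    ConjClasses.mk (r i) = ConjClasses.mk (r j) ↔ j = i ∨ j = -i := by
  rw [ConjClasses.mk_eq_mk_iff_isConj, isConj_r_iff]
  simp

lemma zmod_addSubgroup (hn : n ≠ 0) (S : AddSubgroup (ZMod n)) :
    S = AddSubgroup.zmultiples ((n / Nat.card S : ℕ) : ZMod n) := by
  haveI : NeZero n := ⟨hn⟩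
  obtain ⟨⟨g, hgS⟩, hg⟩ := IsAddCyclic.exists_generator (α := S)
  have hS : S = AddSubgroup.zmultiples g := by
    apply le_antisymm
    · intro x hx
      obtain ⟨m, hm⟩ := hg ⟨x, hx⟩
      exact ⟨m, by simpa using congrArg Subtype.val hm⟩
    · rintro x ⟨m, rfl⟩
      exact S.zsmul_mem hgS m
  set v := g.val with hv
  have hgv : ((v : ℕ) : ZMod n) = g := ZMod.natCast_rightInverse g
  have hcard : Nat.card S = addOrderOf g := by rw [hS, Nat.card_zmultiples]
  have horder : addOrderOf g = n / n.gcd v := by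
    rw [← hgv, ZMod.addOrderOf_coe v hn]
  have hgcd_dvd : n.gcd v ∣ n := Nat.gcd_dvd_left n v
  have hnd : n / Nat.card S = n.gcd v := by
    rw [hcard, horder, Nat.div_div_self hgcd_dvd hn]
  rw [hnd, hS]
  apply le_antisymm
  · rintro x ⟨m, rfl⟩
    have hmem : g ∈ AddSubgroup.zmultiples ((n.gcd v : ℕ) : ZMod n) := by
      refine ⟨((v / n.gcd v : ℕ) : ℤ), ?_⟩
      have h1 : v / n.gcd v * n.gcd v = v := Nat.div_mul_cancel (Nat.gcd_dvd_right n v)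
      show ((v / n.gcd v : ℕ) : ℤ) • ((n.gcd v : ℕ) : ZMod n) = g
      rw [zsmul_eq_mul, Int.cast_natCast, ← Nat.cast_mul, h1, hgv]
    exact AddSubgroup.zsmul_mem _ hmem m
  · rintro x ⟨m, rfl⟩
    have hmem : ((n.gcd v : ℕ) : ZMod n) ∈ AddSubgroup.zmultiples g := by
      refine ⟨Nat.gcdB n v, ?_⟩
      have hbez : (n.gcd v : ℤ) = n * Nat.gcdA n v + v * Nat.gcdB n v := Nat.gcd_eq_gcd_ab n v
      have h2 : ((n.gcd v : ℤ) : ZMod n) = ((n * Nat.gcdA n v + v * Nat.gcdB n v : ℤ) : ZMod n) := by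
        rw [← hbez]
      push_cast at h2
      rw [ZMod.natCast_self] at h2
      show Nat.gcdB n v • g = ((n.gcd v : ℕ) : ZMod n)
      rw [zsmul_eq_mul, ← hgv]
      push_cast
      rw [h2]
      ring
    exact AddSubgroup.zsmul_mem _ hmem m

lemma inj_aux (hn : n ≠ 0) {c d : ℕ} (hcd : c * d = n) (hc : 0 < c) {k l : ℕ}
    (hk : k ≤ d / 2) (hl : l ≤ d / 2)
    (h : ((k * c : ℕ) : ZMod n) = ((l * c : ℕ) : ZMod n) ∨
         ((k * c : ℕ) : ZMod n) = -((l * c : ℕ) : ZMod n)) : k = l := by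
  have hd : 0 < d := by
    rcases Nat.eq_zero_or_pos d with h0 | h0
    · subst h0; simp at hcd; omega
    · exact h0
  have hhalf : 2 * (d / 2 * c) ≤ n := by
    have h1 : 2 * (d / 2) ≤ d := Nat.mul_div_le d 2
    calc 2 * (d / 2 * c) = 2 * (d / 2) * c := by ring
    _ ≤ d * c := Nat.mul_le_mul_right c h1
    _ = n := by rw [Nat.mul_comm]; exact hcd
  have hkc : 2 * (k * c) ≤ n := by
    have := Nat.mul_le_mul_right c hk; omega
  have hlc : 2 * (l * c) ≤ n := by
    have := Nat.mul_le_mul_right c hl; omega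
  rcases h with h | h
  · rw [ZMod.natCast_eq_natCast_iff] at h
    have h1 : k * c % n = l * c % n := h
    rw [Nat.mod_eq_of_lt (by omega), Nat.mod_eq_of_lt (by omega)] at h1
    exact Nat.eq_of_mul_eq_mul_right hc h1
  · have hsum : ((k * c + l * c : ℕ) : ZMod n) = 0 := by
      push_cast at h ⊢
      rw [h]; ring
    rw [ZMod.natCast_eq_zero_iff] at hsum
    have hle : k * c + l * c ≤ n := by omega
    have hcase : k * c + l * c = 0 ∨ k * c + l * c = n := by
      rcases hsum with ⟨t, ht⟩
      rcases Nat.eq_zero_or_pos t with h0 | h0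
      · left; rw [h0, Nat.mul_zero] at ht; omega
      · right
        have : n ≤ n * t := Nat.le_mul_of_pos_right n h0
        omega
    rcases hcase with h0 | h0
    · have hk0 : k * c = 0 := by omega
      have hl0 : l * c = 0 := by omega
      have hk' : k = 0 := by rcases Nat.mul_eq_zero.mp hk0 with h' | h'; exact h'; omega
      have hl' : l = 0 := by rcases Nat.mul_eq_zero.mp hl0 with h' | h'; exact h'; omega
      omega
    · have hkl : (k + l) * c = d * c := by
        rw [Nat.add_mul, h0, ← hcd, Nat.mul_comm]
      have := Nat.eq_of_mul_eq_mul_right hc hkl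
      omega

lemma surj_aux {c d : ℕ} (hcd : c * d = n) (hd : 0 < d) {i : ZMod n}
    (hi : i ∈ AddSubgroup.zmultiples ((c : ℕ) : ZMod n)) :
    ∃ k : ℕ, k ≤ d / 2 ∧ (i = ((k * c : ℕ) : ZMod n) ∨ i = -((k * c : ℕ) : ZMod n)) := by
  obtain ⟨m, rfl⟩ := hi
  set k0 : ℕ := (m % (d : ℤ)).toNat with hk0
  have hd' : (0 : ℤ) < d := by exact_mod_cast hd
  have hnn : 0 ≤ m % (d : ℤ) := Int.emod_nonneg m (by omega)
  have hlt : m % (d : ℤ) < d := Int.emod_lt_of_pos m hd'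
  have hk0d : k0 < d := by omega
  have hdc : ((d * c : ℕ) : ZMod n) = 0 := by
    rw [Nat.mul_comm, hcd, ZMod.natCast_self]
  have hx0 : (d : ℤ) • ((c : ℕ) : ZMod n) = 0 := by
    rw [zsmul_eq_mul, Int.cast_natCast, ← Nat.cast_mul, hdc]
  have hstep : m • ((c : ℕ) : ZMod n) = ((k0 * c : ℕ) : ZMod n) := by
    have hmk : m % (d : ℤ) = (k0 : ℤ) := (Int.toNat_of_nonneg hnn).symm
    conv_lhs => rw [← Int.mul_ediv_add_emod m (d : ℤ)]
    rw [add_zsmul, mul_comm ((d : ℤ)) (m / (d : ℤ)), mul_zsmul, hx0, smul_zero, zero_add,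
      hmk, zsmul_eq_mul, Int.cast_natCast, ← Nat.cast_mul]
  show ∃ k : ℕ, k ≤ d / 2 ∧ ((fun x => x • ((c : ℕ) : ZMod n)) m = ((k * c : ℕ) : ZMod n) ∨
    (fun x => x • ((c : ℕ) : ZMod n)) m = -((k * c : ℕ) : ZMod n))
  simp only []
  by_cases hhalf : k0 ≤ d / 2
  · exact ⟨k0, hhalf, Or.inl hstep⟩
  · refine ⟨d - k0, by omega, Or.inr ?_⟩
    have hsumn : k0 * c + (d - k0) * c = d * c := by
      rw [← Nat.add_mul, Nat.add_sub_cancel' (le_of_lt hk0d)]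
    have hsum : ((k0 * c : ℕ) : ZMod n) + (((d - k0) * c : ℕ) : ZMod n) = 0 := by
      rw [← Nat.cast_add, hsumn, hdc]
    rw [hstep]
    exact eq_neg_of_add_eq_zero_left hsum

lemma ncc_rot (hn : n ≠ 0) {c d : ℕ} (hcd : c * d = n) (hc : 0 < c) (hd : 0 < d)
    (A : Subgroup (DihedralGroup n))
    (hA : ∀ g, g ∈ A ↔ ∃ i ∈ AddSubgroup.zmultiples ((c : ℕ) : ZMod n), g = r i) :
    ncc A = d / 2 + 1 := by
  have hmemS : ∀ k : ℕ, ((k * c : ℕ) : ZMod n) ∈ AddSubgroup.zmultiples ((c : ℕ) : ZMod n) := by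
    intro k
    refine ⟨(k : ℤ), ?_⟩
    show (k : ℤ) • ((c : ℕ) : ZMod n) = ((k * c : ℕ) : ZMod n)
    rw [zsmul_eq_mul, Int.cast_natCast, ← Nat.cast_mul]
  have hsub : ∀ k : ℕ, (ConjClasses.mk (r (((k * c : ℕ) : ZMod n)))).carrier ⊆ (A : Set (DihedralGroup n)) := by
    intro k
    rw [carrier_mk_r]
    rintro x hx
    rcases hx with rfl | rfl
    · exact (hA _).2 ⟨_, hmemS k, rfl⟩
    · exact (hA _).2 ⟨_, AddSubgroup.neg_mem _ (hmemS k), rfl⟩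
  let F : Fin (d / 2 + 1) → {cl : ConjClasses (DihedralGroup n) // cl.carrier ⊆ (A : Set (DihedralGroup n))} :=
    fun k => ⟨ConjClasses.mk (r (((k : ℕ) * c : ℕ) : ZMod n)), hsub k⟩
  have hbij : Function.Bijective F := by
    constructor
    · intro k l h
      have h' : ConjClasses.mk (r ((((k : ℕ) * c : ℕ) : ZMod n)))
          = ConjClasses.mk (r ((((l : ℕ) * c : ℕ) : ZMod n))) := congrArg Subtype.val h
      rw [mk_r_eq_mk_r_iff] at h'
      have hk : (k : ℕ) ≤ d / 2 := Nat.lt_succ_iff.mp k.isLt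
      have hl : (l : ℕ) ≤ d / 2 := Nat.lt_succ_iff.mp l.isLt
      apply Fin.ext
      apply inj_aux hn hcd hc hk hl
      rcases h' with h' | h'
      · exact Or.inl h'.symm
      · exact Or.inr (by rw [h', neg_neg])
    · rintro ⟨cl, hcl⟩
      obtain ⟨g, rfl⟩ := cl.exists_rep
      rcases g with i | i
      · have hi : r i ∈ A := hcl (ConjClasses.mem_carrier_iff_mk_eq.mpr rfl)
        obtain ⟨i', hi', heq⟩ := (hA _).1 hi
        rw [r.injEq] at heq
        subst heq
        obtain ⟨k, hk, hcase⟩ := surj_aux hcd hd hi'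
        refine ⟨⟨k, Nat.lt_succ_of_le hk⟩, ?_⟩
        apply Subtype.ext
        show ConjClasses.mk (r (((k * c : ℕ) : ZMod n))) = ConjClasses.mk (r i)
        rw [mk_r_eq_mk_r_iff]
        exact hcase
      · have hi : sr i ∈ A := hcl (ConjClasses.mem_carrier_iff_mk_eq.mpr rfl)
        obtain ⟨i', _, heq⟩ := (hA _).1 hi
        exact absurd heq (by simp)
  have hcount := Nat.card_eq_of_bijective F hbij
  rw [Nat.card_eq_fintype_card, Fintype.card_fin] at hcount
  exact hcount.symm

lemma ncc_mixed (hn : n ≠ 0) (h2 : 2 ∣ n) (i₀ : ZMod n)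
    (A : Subgroup (DihedralGroup n))
    (hA : ∀ g, g ∈ A ↔ (∃ i ∈ AddSubgroup.zmultiples ((2 : ℕ) : ZMod n), g = r i) ∨
        (∃ i ∈ AddSubgroup.zmultiples ((2 : ℕ) : ZMod n), g = sr (i₀ + i))) :
    ncc A = n / 4 + 2 := by
  obtain ⟨d, hd⟩ := h2
  have hcd : 2 * d = n := hd.symm
  have hd0 : 0 < d := by omega
  have hd2 : d / 2 = n / 4 := by omega
  have hmemS : ∀ k : ℕ, ((k * 2 : ℕ) : ZMod n) ∈ AddSubgroup.zmultiples ((2 : ℕ) : ZMod n) := by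
    intro k
    refine ⟨(k : ℤ), ?_⟩
    show (k : ℤ) • ((2 : ℕ) : ZMod n) = ((k * 2 : ℕ) : ZMod n)
    rw [zsmul_eq_mul, Int.cast_natCast, ← Nat.cast_mul]
  have hmem2j : ∀ j : ZMod n, 2 * j ∈ AddSubgroup.zmultiples ((2 : ℕ) : ZMod n) := by
    intro j
    haveI : NeZero n := ⟨hn⟩
    refine ⟨(j.val : ℤ), ?_⟩
    show (j.val : ℤ) • ((2 : ℕ) : ZMod n) = 2 * j
    rw [zsmul_eq_mul, Int.cast_natCast, ZMod.natCast_rightInverse j]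
    push_cast
    ring
  have hsub : ∀ k : ℕ, (ConjClasses.mk (r (((k * 2 : ℕ) : ZMod n)))).carrier ⊆ (A : Set (DihedralGroup n)) := by
    intro k
    rw [carrier_mk_r]
    rintro x hx
    rcases hx with rfl | rfl
    · exact (hA _).2 (Or.inl ⟨_, hmemS k, rfl⟩)
    · exact (hA _).2 (Or.inl ⟨_, AddSubgroup.neg_mem _ (hmemS k), rfl⟩)
  have hsubs : (ConjClasses.mk (sr i₀)).carrier ⊆ (A : Set (DihedralGroup n)) := by
    rw [carrier_mk_sr]
    rintro x ⟨j, rfl⟩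
    exact (hA _).2 (Or.inr ⟨2 * j, hmem2j j, rfl⟩)
  have hmkne : ∀ a : ZMod n, ConjClasses.mk (r a) ≠ ConjClasses.mk (sr i₀) := by
    intro a h
    rw [ConjClasses.mk_eq_mk_iff_isConj, isConj_r_iff] at h
    rcases h with h | h <;> exact absurd h (by simp)
  let F : Fin (n / 4 + 2) → {cl : ConjClasses (DihedralGroup n) // cl.carrier ⊆ (A : Set (DihedralGroup n))} :=
    fun k => if h : (k : ℕ) < n / 4 + 1 then ⟨ConjClasses.mk (r (((k : ℕ) * 2 : ℕ) : ZMod n)), hsub k⟩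
      else ⟨ConjClasses.mk (sr i₀), hsubs⟩
  have hbij : Function.Bijective F := by
    constructor
    · intro k l h
      by_cases hk : (k : ℕ) < n / 4 + 1 <;> by_cases hl : (l : ℕ) < n / 4 + 1
      · rw [show F k = ⟨ConjClasses.mk (r (((k : ℕ) * 2 : ℕ) : ZMod n)), hsub k⟩ from dif_pos hk,
          show F l = ⟨ConjClasses.mk (r (((l : ℕ) * 2 : ℕ) : ZMod n)), hsub l⟩ from dif_pos hl] at h
        have h' := congrArg Subtype.val h
        simp only at h'
        rw [mk_r_eq_mk_r_iff] at h'
        apply Fin.ext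
        apply inj_aux hn hcd (by omega) (by omega : (k : ℕ) ≤ d / 2) (by omega : (l : ℕ) ≤ d / 2)
        rcases h' with h' | h'
        · exact Or.inl h'.symm
        · exact Or.inr (by rw [h', neg_neg])
      · rw [show F k = ⟨ConjClasses.mk (r (((k : ℕ) * 2 : ℕ) : ZMod n)), hsub k⟩ from dif_pos hk,
          show F l = ⟨ConjClasses.mk (sr i₀), hsubs⟩ from dif_neg hl] at h
        exact absurd (congrArg Subtype.val h) (hmkne _)
      · rw [show F k = ⟨ConjClasses.mk (sr i₀), hsubs⟩ from dif_neg hk,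
          show F l = ⟨ConjClasses.mk (r (((l : ℕ) * 2 : ℕ) : ZMod n)), hsub l⟩ from dif_pos hl] at h
        exact absurd (congrArg Subtype.val h).symm (hmkne _)
      · apply Fin.ext
        have hk' := k.isLt
        have hl' := l.isLt
        omega
    · rintro ⟨cl, hcl⟩
      obtain ⟨g, rfl⟩ := cl.exists_rep
      rcases g with i | i
      · have hi : r i ∈ A := hcl (ConjClasses.mem_carrier_iff_mk_eq.mpr rfl)
        rcases (hA _).1 hi with ⟨i', hi', heq⟩ | ⟨i', _, heq⟩
        · rw [r.injEq] at heq
          subst heq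
          obtain ⟨k, hk, hcase⟩ := surj_aux hcd hd0 hi'
          refine ⟨⟨k, by omega⟩, ?_⟩
          have hklt : ((⟨k, by omega⟩ : Fin (n / 4 + 2)) : ℕ) < n / 4 + 1 := by
            show k < n / 4 + 1
            omega
          rw [show F ⟨k, by omega⟩ = ⟨ConjClasses.mk (r (((k * 2 : ℕ) : ZMod n))), hsub k⟩ from dif_pos hklt]
          apply Subtype.ext
          show ConjClasses.mk (r (((k * 2 : ℕ) : ZMod n))) = ConjClasses.mk (r i)
          rw [mk_r_eq_mk_r_iff]
          exact hcase
        · exact absurd heq (by simp)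
      · have hi : sr i ∈ A := hcl (ConjClasses.mem_carrier_iff_mk_eq.mpr rfl)
        rcases (hA _).1 hi with ⟨i', _, heq⟩ | ⟨i', hi', heq⟩
        · exact absurd heq (by simp)
        · refine ⟨⟨n / 4 + 1, by omega⟩, ?_⟩
          rw [show F ⟨n / 4 + 1, by omega⟩ = ⟨ConjClasses.mk (sr i₀), hsubs⟩ from
            dif_neg (by show ¬ (n / 4 + 1 < n / 4 + 1); omega)]
          apply Subtype.ext
          show ConjClasses.mk (sr i₀) = ConjClasses.mk (sr i)
          rw [ConjClasses.mk_eq_mk_iff_isConj, isConj_sr_iff]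
          obtain ⟨m, hm⟩ := hi'
          have hm' : (m : ℤ) • ((2 : ℕ) : ZMod n) = i' := hm
          rw [sr.injEq] at heq
          refine ⟨(m : ZMod n) * 1, ?_⟩
          rw [sr.injEq, heq, ← hm', zsmul_eq_mul]
          push_cast
          ring
  have hcount := Nat.card_eq_of_bijective F hbij
  rw [Nat.card_eq_fintype_card, Fintype.card_fin] at hcount
  exact hcount.symm


lemma mem_two_zmultiples_iff (hn : n ≠ 0) {i : ZMod n} :
    i ∈ AddSubgroup.zmultiples ((2 : ℕ) : ZMod n) ↔ ∃ j : ZMod n, i = 2 * j := by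
  haveI : NeZero n := ⟨hn⟩
  constructor
  · rintro ⟨m, rfl⟩
    refine ⟨(m : ZMod n), ?_⟩
    show (m : ℤ) • ((2 : ℕ) : ZMod n) = 2 * (m : ZMod n)
    rw [zsmul_eq_mul]
    push_cast
    ring
  · rintro ⟨j, rfl⟩
    refine ⟨(j.val : ℤ), ?_⟩
    show (j.val : ℤ) • ((2 : ℕ) : ZMod n) = 2 * j
    rw [zsmul_eq_mul, Int.cast_natCast, ZMod.natCast_rightInverse j]
    push_cast
    ring

/-- The subgroup of rotations indexed by an additive subgroup of `ZMod n`. -/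
def rotSub (S : AddSubgroup (ZMod n)) : Subgroup (DihedralGroup n) where
  carrier := {g | ∃ i ∈ S, g = r i}
  one_mem' := ⟨0, S.zero_mem, one_def⟩
  mul_mem' := by
    rintro _ _ ⟨i, hi, rfl⟩ ⟨j, hj, rfl⟩
    exact ⟨i + j, S.add_mem hi hj, rfl⟩
  inv_mem' := by
    rintro _ ⟨i, hi, rfl⟩
    exact ⟨-i, S.neg_mem hi, rfl⟩

lemma mem_rotSub_iff (S : AddSubgroup (ZMod n)) (g : DihedralGroup n) :
    g ∈ rotSub S ↔ ∃ i ∈ S, g = r i := Iff.rfl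

lemma rotSub_normal (S : AddSubgroup (ZMod n)) : (rotSub S).Normal := by
  constructor
  rintro _ ⟨i, hi, rfl⟩ g
  rcases g with j | j
  · refine ⟨i, hi, ?_⟩
    rw [r_inv, r_mul_r, r_mul_r]
    congr 1
    ring
  · refine ⟨-i, S.neg_mem hi, ?_⟩
    rw [sr_inv, sr_mul_r, sr_mul_sr]
    congr 1
    ring

lemma rotSub_ne_top (S : AddSubgroup (ZMod n)) : rotSub S ≠ ⊤ := by
  intro h
  have hmem : sr 0 ∈ rotSub S := h ▸ Subgroup.mem_top _
  obtain ⟨i, _, hi⟩ := hmem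
  exact absurd hi (by simp)

/-- The index-2 subgroup containing the even rotations and "even" reflections. -/
def mixSub (n : ℕ) : Subgroup (DihedralGroup n) where
  carrier := {g | (∃ i ∈ AddSubgroup.zmultiples ((2 : ℕ) : ZMod n), g = r i) ∨
    (∃ i ∈ AddSubgroup.zmultiples ((2 : ℕ) : ZMod n), g = sr i)}
  one_mem' := Or.inl ⟨0, AddSubgroup.zero_mem _, one_def⟩
  mul_mem' := by
    rintro _ _ (⟨i, hi, rfl⟩ | ⟨i, hi, rfl⟩) (⟨j, hj, rfl⟩ | ⟨j, hj, rfl⟩)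
    · exact Or.inl ⟨i + j, AddSubgroup.add_mem _ hi hj, rfl⟩
    · exact Or.inr ⟨j - i, AddSubgroup.sub_mem _ hj hi, rfl⟩
    · exact Or.inr ⟨i + j, AddSubgroup.add_mem _ hi hj, rfl⟩
    · exact Or.inl ⟨j - i, AddSubgroup.sub_mem _ hj hi, rfl⟩
  inv_mem' := by
    rintro _ (⟨i, hi, rfl⟩ | ⟨i, hi, rfl⟩)
    · exact Or.inl ⟨-i, AddSubgroup.neg_mem _ hi, rfl⟩
    · exact Or.inr ⟨i, hi, rfl⟩

lemma mixSub_normal (hn : n ≠ 0) : (mixSub n).Normal := by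
  constructor
  rintro _ (⟨i, hi, rfl⟩ | ⟨i, hi, rfl⟩) g <;> rcases g with j | j
  · refine Or.inl ⟨i, hi, ?_⟩
    rw [r_inv, r_mul_r, r_mul_r]
    congr 1; ring
  · refine Or.inl ⟨-i, AddSubgroup.neg_mem _ hi, ?_⟩
    rw [sr_inv, sr_mul_r, sr_mul_sr]
    congr 1; ring
  · refine Or.inr ⟨i - 2 * j, AddSubgroup.sub_mem _ hi
      ((mem_two_zmultiples_iff hn).2 ⟨j, rfl⟩), ?_⟩
    rw [r_inv, r_mul_sr, sr_mul_r]
    congr 1; ring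
  · refine Or.inr ⟨2 * j - i, AddSubgroup.sub_mem _
      ((mem_two_zmultiples_iff hn).2 ⟨j, rfl⟩) hi, ?_⟩
    rw [sr_inv, sr_mul_sr, r_mul_sr]
    congr 1; ring

lemma mixSub_ne_top (hn : n ≠ 0) (h2 : 2 ∣ n) : mixSub n ≠ ⊤ := by
  intro h
  have hmem : sr 1 ∈ mixSub n := h ▸ Subgroup.mem_top _
  rcases hmem with ⟨i, _, hi⟩ | ⟨i, hi, hsr⟩
  · exact absurd hi (by simp)
  · rw [sr.injEq] at hsr
    subst hsr
    obtain ⟨m, hm⟩ := hi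
    have hm' : m • ((2 : ℕ) : ZMod n) = 1 := hm
    have hc := congrArg (ZMod.castHom h2 (ZMod 2)) hm'
    rw [map_zsmul, map_natCast, map_one] at hc
    rw [show ((2 : ℕ) : ZMod 2) = 0 by decide, smul_zero] at hc
    exact absurd hc.symm one_ne_zero

/-- The additive subgroup of indices of rotations in `A`. -/
def rotIdx (A : Subgroup (DihedralGroup n)) : AddSubgroup (ZMod n) where
  carrier := {i | r i ∈ A}
  zero_mem' := by
    show r 0 ∈ A
    rw [← one_def]
    exact A.one_mem
  add_mem' := by
    intro a b ha hb
    show r (a + b) ∈ A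
    rw [← r_mul_r]
    exact A.mul_mem ha hb
  neg_mem' := by
    intro a ha
    show r (-a) ∈ A
    rw [← r_inv]
    exact A.inv_mem ha

lemma card_two_zmultiples (hn : n ≠ 0) (h2 : 2 ∣ n) :
    Nat.card (AddSubgroup.zmultiples ((2 : ℕ) : ZMod n)) = n / 2 := by
  rw [Nat.card_zmultiples, ZMod.addOrderOf_coe 2 hn, Nat.gcd_comm, Nat.gcd_eq_left h2]

lemma forward_classification (hn4 : 4 ≤ n) (h4 : 4 ∣ n) (A : Subgroup (DihedralGroup n))
    (hN : A.Normal) (hT : A ≠ ⊤) :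
    (∃ d, d ∣ n ∧ 0 < d ∧ ncc A = d / 2 + 1) ∨ ncc A = n / 4 + 2 := by
  have hn : n ≠ 0 := by omega
  haveI : NeZero n := ⟨hn⟩
  have h2 : 2 ∣ n := dvd_trans ⟨2, rfl⟩ h4
  by_cases hrot : ∀ g ∈ A, ∃ i, g = r i
  · left
    set S := rotIdx A with hSdef
    have hfin : (Nat.card S) ∣ n := by
      have := AddSubgroup.card_addSubgroup_dvd_card S
      rwa [Nat.card_zmod] at this
    have hpos : 0 < Nat.card S := Nat.card_pos
    refine ⟨Nat.card S, hfin, hpos, ?_⟩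
    have hSz := zmod_addSubgroup hn S
    have hc : 0 < n / Nat.card S := Nat.div_pos (Nat.le_of_dvd (by omega) hfin) hpos
    have hcd : (n / Nat.card S) * Nat.card S = n := Nat.div_mul_cancel hfin
    apply ncc_rot hn hcd hc hpos
    intro g
    constructor
    · intro hg
      obtain ⟨i, rfl⟩ := hrot g hg
      exact ⟨i, by rw [← hSz]; exact hg, rfl⟩
    · rintro ⟨i, hi, rfl⟩
      rw [← hSz] at hi
      exact hi
  · right
    push_neg at hrot
    obtain ⟨g0, hg0A, hg0⟩ := hrot
    obtain ⟨i₀, rfl⟩ : ∃ i₀, g0 = sr i₀ := by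
      rcases g0 with i | i
      · exact absurd rfl (hg0 i)
      · exact ⟨i, rfl⟩
    clear hg0
    have hrconj : ∀ j : ZMod n, r (2 * j) ∈ A := by
      intro j
      have h1 : sr (i₀ + 2 * j) ∈ A := by
        have := hN.conj_mem _ hg0A (r (-j))
        rwa [r_inv, r_mul_sr, sr_mul_r, neg_neg, show i₀ - -j + j = i₀ + 2 * j by ring] at this
      have h3 := A.mul_mem hg0A h1
      rwa [sr_mul_sr, show i₀ + 2 * j - i₀ = 2 * j by ring] at h3
    have key : ∀ m : ZMod n, r m ∈ A → m ∈ AddSubgroup.zmultiples ((2 : ℕ) : ZMod n) := by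
      intro m hm
      by_contra hmS
      have hS2T : AddSubgroup.zmultiples ((2 : ℕ) : ZMod n) ≤ rotIdx A := by
        intro x hx
        obtain ⟨j, rfl⟩ := (mem_two_zmultiples_iff hn).1 hx
        exact hrconj j
      have hcS2 : Nat.card (AddSubgroup.zmultiples ((2 : ℕ) : ZMod n)) = n / 2 :=
        card_two_zmultiples hn h2
      have hdvd1 : Nat.card (AddSubgroup.zmultiples ((2 : ℕ) : ZMod n)) ∣ Nat.card (rotIdx A) :=
        AddSubgroup.card_dvd_of_le hS2T
      have hdvd2 : Nat.card (rotIdx A) ∣ n := by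
        have := AddSubgroup.card_addSubgroup_dvd_card (rotIdx A)
        rwa [Nat.card_zmod] at this
      have hne : Nat.card (rotIdx A) ≠ n / 2 := by
        intro hEq
        have heq2 : AddSubgroup.zmultiples ((2 : ℕ) : ZMod n) = rotIdx A :=
          AddSubgroup.eq_of_le_of_card_ge hS2T (by rw [hcS2, hEq])
        exact hmS (heq2 ▸ (hm : m ∈ rotIdx A))
      have hcardn : Nat.card (rotIdx A) = n := by
        rw [hcS2] at hdvd1
        obtain ⟨k, hk⟩ := hdvd1
        obtain ⟨t, ht⟩ := hdvd2
        have h5 : (n / 2) * 2 = n := Nat.div_mul_cancel h2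
        have hkt : (n / 2) * (k * t) = (n / 2) * 2 := by
          calc (n / 2) * (k * t) = (n / 2 * k) * t := by ring
          _ = Nat.card (rotIdx A) * t := by rw [hk]
          _ = n := ht.symm
          _ = (n / 2) * 2 := h5.symm
        have hkt2 : k * t = 2 := Nat.eq_of_mul_eq_mul_left (by omega) hkt
        have hk1 : k ≠ 1 := by
          intro h1
          rw [h1, Nat.mul_one] at hk
          exact hne hk
        have hkle : k ≤ 2 := Nat.le_of_dvd (by norm_num) ⟨t, hkt2.symm⟩
        have hkpos : 0 < k := by
          rcases Nat.eq_zero_or_pos k with h0 | h0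
          · rw [h0, Nat.zero_mul] at hkt2; omega
          · exact h0
        have hk2 : k = 2 := by omega
        rw [hk, hk2, h5]
      have hTtop : rotIdx A = ⊤ :=
        AddSubgroup.eq_top_of_card_eq _ (by rw [hcardn, Nat.card_zmod])
      apply hT
      rw [Subgroup.eq_top_iff']
      intro g
      rcases g with j | j
      · exact (hTtop ▸ AddSubgroup.mem_top j : j ∈ rotIdx A)
      · have h1 : r (j - i₀) ∈ A := (hTtop ▸ AddSubgroup.mem_top (j - i₀) : (j - i₀) ∈ rotIdx A)
        have h3 := A.mul_mem hg0A h1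
        rwa [sr_mul_r, show i₀ + (j - i₀) = j by ring] at h3
    apply ncc_mixed hn h2 i₀
    intro g
    constructor
    · intro hg
      rcases g with m | m
      · exact Or.inl ⟨m, key m hg, rfl⟩
      · right
        have h1 : r (m - i₀) ∈ A := by
          have h3 := A.mul_mem (A.inv_mem hg0A) hg
          rwa [sr_inv, sr_mul_sr] at h3
        exact ⟨m - i₀, key _ h1, by rw [sr.injEq]; ring⟩
    · rintro (⟨i, hi, rfl⟩ | ⟨i, hi, rfl⟩)
      · obtain ⟨j, rfl⟩ := (mem_two_zmultiples_iff hn).1 hi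
        exact hrconj j
      · obtain ⟨j, rfl⟩ := (mem_two_zmultiples_iff hn).1 hi
        have h1 := hN.conj_mem _ hg0A (r (-j))
        rwa [r_inv, r_mul_sr, sr_mul_r, neg_neg,
          show i₀ - -j + j = i₀ + 2 * j by ring] at h1


end DihedralNcc

/-- For `n ≥ 4` with `4 ∣ n`, the dihedral group `D_{2n}` is `A`-decomposable, where
`A = Y ∪ {n/4 + 2}` and `Y = {(d+1)/2 : d ∣ n, d odd} ∪ {(d+2)/2 : d ∣ n, d even}`. -/
theorem dihedral_four_dvd_decomposable (n : ℕ) (hn : 4 ≤ n) (h4 : 4 ∣ n) :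
    XDecomposable (DihedralGroup n)
      (({m : ℕ | ∃ d : ℕ, d ∣ n ∧ Odd d ∧ m = (d + 1) / 2} ∪
        {m : ℕ | ∃ d : ℕ, d ∣ n ∧ Even d ∧ m = (d + 2) / 2}) ∪ {n / 4 + 2}) := by
  have hn0 : n ≠ 0 := by omega
  have h2 : 2 ∣ n := dvd_trans ⟨2, rfl⟩ h4
  unfold XDecomposable
  ext m
  simp only [KG, Set.mem_setOf_eq, Set.mem_union, Set.mem_singleton_iff]
  constructor
  · rintro ⟨A, hNorm, hTop, rfl⟩
    rcases DihedralNcc.forward_classification hn h4 A hNorm hTop with ⟨d, hd, hdpos, hncc⟩ | hncc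
    · left
      rcases Nat.even_or_odd d with he | ho
      · right
        refine ⟨d, hd, he, ?_⟩
        obtain ⟨t, rfl⟩ := he
        rw [hncc]
        omega
      · left
        refine ⟨d, hd, ho, ?_⟩
        obtain ⟨t, rfl⟩ := ho
        rw [hncc]
        omega
    · right
      exact hncc
  · rintro ((⟨d, hdvd, hodd, rfl⟩ | ⟨d, hdvd, heven, rfl⟩) | rfl)
    · have hd0 : 0 < d := by
        rcases Nat.eq_zero_or_pos d with h0 | h0
        · subst h0; simp at hodd
        · exact h0
      refine ⟨DihedralNcc.rotSub (AddSubgroup.zmultiples ((n / d : ℕ) : ZMod n)),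
        DihedralNcc.rotSub_normal _, DihedralNcc.rotSub_ne_top _, ?_⟩
      rw [DihedralNcc.ncc_rot hn0 (Nat.div_mul_cancel hdvd)
        (Nat.div_pos (Nat.le_of_dvd (by omega) hdvd) hd0) hd0 _ (fun g => Iff.rfl)]
      obtain ⟨t, rfl⟩ := hodd
      omega
    · have hd0 : 0 < d := by
        rcases Nat.eq_zero_or_pos d with h0 | h0
        · subst h0
          rw [Nat.zero_dvd] at hdvd
          omega
        · exact h0
      refine ⟨DihedralNcc.rotSub (AddSubgroup.zmultiples ((n / d : ℕ) : ZMod n)),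
        DihedralNcc.rotSub_normal _, DihedralNcc.rotSub_ne_top _, ?_⟩
      rw [DihedralNcc.ncc_rot hn0 (Nat.div_mul_cancel hdvd)
        (Nat.div_pos (Nat.le_of_dvd (by omega) hdvd) hd0) hd0 _ (fun g => Iff.rfl)]
      obtain ⟨t, rfl⟩ := heven
      omega
    · refine ⟨DihedralNcc.mixSub n, DihedralNcc.mixSub_normal hn0,
        DihedralNcc.mixSub_ne_top hn0 h2, ?_⟩
      apply DihedralNcc.ncc_mixed hn0 h2 0
      intro g
      constructor
      · rintro (⟨i, hi, rfl⟩ | ⟨i, hi, rfl⟩)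
        · exact Or.inl ⟨i, hi, rfl⟩
        · exact Or.inr ⟨i, hi, by rw [zero_add]⟩
      · rintro (⟨i, hi, rfl⟩ | ⟨i, hi, rfl⟩)
        · exact Or.inl ⟨i, hi, rfl⟩
        · exact Or.inr ⟨i, hi, by rw [zero_add]⟩
end

section
/- Let n ≥ 3 be odd and let Q_{4n} be the generalized quaternion group of order 4n. Then every proper normal subgroup of Q_{4n} is contained in the cyclic subgroup ⟨a⟩, and Q_{4n} is X-decomposable, where X = {(d+1)/2 : d | n, d odd} ∪ {(d+2)/2 : d | 2n, d even}. -/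
/-!
A normal subgroup containing some `xa i` also contains `xa i ^ 2 = a n` and, conjugating by `a 1`,
the element `a 2`; as `n` is odd it then contains `a 1`, hence everything. So the proper normal
subgroups are exactly the subgroups `H` of the cyclic group `⟨a⟩`, one of each order `d ∣ 2n`.
For such `H`, Burnside's lemma for the conjugation action of `Q_{4n}` on `H` (where `a j` acts
trivially and `xa j` by inversion) gives `2 · ncc H = |H| + f` with `f` the number of solutions of
`h² = 1` in `H`. As `H` is cyclic, `f ∈ {1, 2}`, and the parity forces `ncc H = |H| / 2 + 1`.
-/

open MulAction

section ConjugacyClassCount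

variable {G : Type*} [Group G]

theorem ConjClasses.carrier_mk_subset_of_normal {H : Subgroup G} (hH : H.Normal) {h : G}
    (h_mem : h ∈ H) : (ConjClasses.mk h).carrier ⊆ H := by
  intro x hx
  obtain ⟨c, rfl⟩ := isConj_iff.mp (ConjClasses.mk_eq_mk_iff_isConj.mp
    (ConjClasses.mem_carrier_iff_mk_eq.mp hx)).symm
  exact hH.conj_mem h h_mem c

theorem ncc_eq_card_orbitRel_quotient (H : Subgroup G) [hH : H.Normal] :
    ncc H = Nat.card (orbitRel.Quotient (ConjAct G) H) := by
  let F : orbitRel.Quotient (ConjAct G) H → {c : ConjClasses G // c.carrier ⊆ H} :=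
    Quotient.lift
      (fun h : H => ⟨ConjClasses.mk h, ConjClasses.carrier_mk_subset_of_normal hH h.2⟩)
      fun h h' hrel => by
        obtain ⟨c, rfl⟩ := orbitRel_apply.mp hrel
        exact Subtype.ext (ConjClasses.mk_eq_mk_iff_isConj.mpr
          (ConjAct.mem_orbit_conjAct.mp (mem_orbit _ _)))
  refine (Nat.card_eq_of_bijective F ⟨?_, ?_⟩).symm
  · rintro ⟨h⟩ ⟨h'⟩ hF
    obtain ⟨c, hc⟩ := ConjAct.mem_orbit_conjAct.mpr
      (ConjClasses.mk_eq_mk_iff_isConj.mp (congrArg Subtype.val hF))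
    exact Quotient.sound ⟨c, Subtype.ext hc⟩
  · rintro ⟨c, hc⟩
    obtain ⟨g, rfl⟩ := ConjClasses.mk_surjective c
    exact ⟨Quotient.mk _ ⟨g, hc ConjClasses.mem_carrier_mk⟩, rfl⟩

theorem ncc_mul_card_eq_sum_card_fixedBy [Fintype G] (H : Subgroup G) [H.Normal] :
    ncc H * Nat.card G = ∑ g : G, Nat.card (fixedBy H (ConjAct.toConjAct g)) := by
  classical
  calc ncc H * Nat.card G
      = Fintype.card (orbitRel.Quotient (ConjAct G) H) * Fintype.card (ConjAct G) := by
        rw [ncc_eq_card_orbitRel_quotient, ConjAct.card, Nat.card_eq_fintype_card,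
          Nat.card_eq_fintype_card]
    _ = ∑ g : ConjAct G, Fintype.card (fixedBy H g) :=
        (sum_card_fixedBy_eq_card_orbits_mul_card_group _ _).symm
    _ = ∑ g : G, Nat.card (fixedBy H (ConjAct.toConjAct g)) := by
        simp only [Nat.card_eq_fintype_card]
        exact (ConjAct.toConjAct.toEquiv.sum_comp _).symm

end ConjugacyClassCount

theorem IsCyclic.card_inv_eq_self_le_two {G : Type*} [Group G] [Finite G] [IsCyclic G] :
    Nat.card {x : G // x⁻¹ = x} ≤ 2 := by
  classical
  have := Fintype.ofFinite G
  calc Nat.card {x : G // x⁻¹ = x} = (Finset.univ.filter fun x : G => x ^ 2 = 1).card := by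
        rw [Nat.card_eq_fintype_card, Fintype.card_subtype]
        simp only [inv_eq_iff_mul_eq_one, sq]
    _ ≤ 2 := IsCyclic.card_pow_eq_one_le two_pos

theorem setOf_div_two_add_one_of_dvd_two_mul (n : ℕ) :
    {m | ∃ d, d ∣ 2 * n ∧ m = d / 2 + 1} =
      {m | ∃ d, d ∣ n ∧ Odd d ∧ m = (d + 1) / 2} ∪
        {m | ∃ d, d ∣ 2 * n ∧ Even d ∧ m = (d + 2) / 2} := by
  ext m
  constructor
  · rintro ⟨d, hd, rfl⟩
    rcases Nat.even_or_odd d with hd_even | hd_odd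
    · exact Or.inr ⟨d, hd, hd_even, by obtain ⟨t, rfl⟩ := hd_even; omega⟩
    · refine Or.inl ⟨d, (Nat.coprime_two_right.mpr hd_odd).dvd_of_dvd_mul_left hd, hd_odd, ?_⟩
      obtain ⟨t, rfl⟩ := hd_odd
      omega
  · rintro (⟨d, hd, ⟨t, rfl⟩, rfl⟩ | ⟨d, hd, ⟨t, rfl⟩, rfl⟩)
    · exact ⟨2 * t + 1, dvd_mul_of_dvd_right hd 2, by omega⟩
    · exact ⟨t + t, hd, by omega⟩

namespace QuaternionGroup

open Subgroup ConjAct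

variable {n : ℕ}

@[simp]
theorem inv_a (i : ZMod (2 * n)) : (a i : QuaternionGroup n)⁻¹ = a (-i) := rfl

@[simp]
theorem inv_xa (i : ZMod (2 * n)) : (xa i : QuaternionGroup n)⁻¹ = xa ((n : ZMod (2 * n)) + i) :=
  rfl

theorem natCast_add_self : (n : ZMod (2 * n)) + n = 0 := by
  have h := ZMod.natCast_self (2 * n)
  push_cast at h
  linear_combination h

theorem conj_a_a (j k : ZMod (2 * n)) : a j * a k * (a j)⁻¹ = a k := by
  simp [a_mul_a]

theorem conj_xa_a (j k : ZMod (2 * n)) : xa j * a k * (xa j)⁻¹ = a (-k) := by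
  rw [xa_mul_a, inv_xa, xa_mul_xa]
  congr 1
  linear_combination (natCast_add_self (n := n))

theorem sum_eq_sum_a_add_sum_xa {M : Type*} [AddCommMonoid M] [NeZero n]
    (f : QuaternionGroup n → M) : ∑ g, f g = ∑ i, f (a i) + ∑ i, f (xa i) := by
  let e : ZMod (2 * n) ⊕ ZMod (2 * n) ≃ QuaternionGroup n :=
    { toFun := Sum.elim a xa
      invFun := fun | a i => .inl i | xa i => .inr i
      left_inv := by rintro (i | i) <;> rfl
      right_inv := by rintro (i | i) <;> rfl }
  rw [← e.sum_comp, Fintype.sum_sum_type]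
  rfl

section SubgroupsOfCyclicPart

variable [NeZero n]

theorem a_mem_zpowers_a_one (i : ZMod (2 * n)) : a i ∈ zpowers (a 1 : QuaternionGroup n) := by
  simpa [ZMod.natCast_zmod_val] using npow_mem_zpowers (a 1 : QuaternionGroup n) i.val

theorem exists_a_eq_of_mem_zpowers {g : QuaternionGroup n} (hg : g ∈ zpowers (a 1)) :
    ∃ k, a k = g := by
  obtain ⟨k, rfl⟩ := mem_powers_iff_mem_zpowers.mpr hg
  exact ⟨k, (a_one_pow k).symm⟩

theorem xa_notMem_zpowers_a_one (i : ZMod (2 * n)) : xa i ∉ zpowers (a 1 : QuaternionGroup n) :=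
  fun h => by
    obtain ⟨k, hk⟩ := exists_a_eq_of_mem_zpowers h
    cases hk

variable {H : Subgroup (QuaternionGroup n)}

theorem normal_of_le_zpowers_a_one (hH : H ≤ zpowers (a 1)) : H.Normal := by
  refine ⟨fun g hg c => ?_⟩
  obtain ⟨k, rfl⟩ := exists_a_eq_of_mem_zpowers (hH hg)
  rcases c with j | j
  · rwa [conj_a_a]
  · rw [conj_xa_a, ← inv_a]
    exact H.inv_mem hg

theorem ne_top_of_le_zpowers_a_one (hH : H ≤ zpowers (a 1)) : H ≠ ⊤ :=
  fun h => xa_notMem_zpowers_a_one 0 (hH (h ▸ mem_top (xa 0)))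

theorem fixedBy_a_eq_univ (hH : H ≤ zpowers (a 1)) [H.Normal] (j : ZMod (2 * n)) :
    fixedBy H (toConjAct (a j)) = Set.univ := by
  refine Set.eq_univ_of_forall fun h => Subtype.ext ?_
  obtain ⟨k, hk⟩ := exists_a_eq_of_mem_zpowers (hH h.2)
  rw [ConjAct.Subgroup.val_conj_smul, toConjAct_smul, ← hk, conj_a_a]

theorem fixedBy_xa_eq (hH : H ≤ zpowers (a 1)) [H.Normal] (j : ZMod (2 * n)) :
    fixedBy H (toConjAct (xa j)) = {h | h⁻¹ = h} := by
  ext h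
  obtain ⟨k, hk⟩ := exists_a_eq_of_mem_zpowers (hH h.2)
  simp only [mem_fixedBy, Set.mem_ofPred_eq, ← Subtype.val_inj, ConjAct.Subgroup.val_conj_smul,
    toConjAct_smul, coe_inv, ← hk, conj_xa_a, inv_a]

theorem two_mul_ncc_eq (hH : H ≤ zpowers (a 1)) [H.Normal] :
    2 * ncc H = Nat.card H + Nat.card {h : H // h⁻¹ = h} := by
  have burnside := ncc_mul_card_eq_sum_card_fixedBy H
  simp only [sum_eq_sum_a_add_sum_xa, fixedBy_a_eq_univ hH, fixedBy_xa_eq hH, Nat.card_univ,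
    Finset.sum_const, Finset.card_univ, ZMod.card, smul_eq_mul, Nat.card_eq_fintype_card, card,
    Set.coe_ofPred] at burnside
  have hn : 0 < 2 * n := Nat.pos_of_ne_zero (mul_ne_zero two_ne_zero (NeZero.ne n))
  exact Nat.eq_of_mul_eq_mul_left hn (by linarith [burnside])

theorem ncc_eq_card_div_two_add_one (hH : H ≤ zpowers (a 1)) : ncc H = Nat.card H / 2 + 1 := by
  have := normal_of_le_zpowers_a_one hH
  have := isCyclic_of_le hH
  have h_count := two_mul_ncc_eq hH
  have : Nonempty {h : H // h⁻¹ = h} := ⟨⟨1, inv_one⟩⟩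
  have h_pos : 0 < Nat.card {h : H // h⁻¹ = h} := Nat.card_pos
  have h_le_two := IsCyclic.card_inv_eq_self_le_two (G := H)
  omega

theorem exists_le_zpowers_a_one_card_eq {d : ℕ} (hd : d ∣ 2 * n) :
    ∃ H : Subgroup (QuaternionGroup n), H ≤ zpowers (a 1) ∧ Nat.card H = d := by
  refine ⟨zpowers (a 1 ^ (2 * n / d)), zpowers_le.mpr (npow_mem_zpowers _ _), ?_⟩
  rw [Nat.card_zpowers, orderOf_pow, orderOf_a_one, Nat.gcd_eq_right (Nat.div_dvd_of_dvd hd),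
    Nat.div_div_self hd (mul_ne_zero two_ne_zero (NeZero.ne n))]

end SubgroupsOfCyclicPart

variable {H : Subgroup (QuaternionGroup n)}

theorem eq_top_of_xa_mem (hodd : Odd n) (hN : H.Normal) {i : ZMod (2 * n)} (hi : xa i ∈ H) :
    H = ⊤ := by
  have : NeZero n := ⟨hodd.pos.ne'⟩
  have h_an : a n ∈ H := xa_sq i ▸ pow_mem hi 2
  have h_a2 : a 2 ∈ H := by
    have h := H.mul_mem (hN.conj_mem _ hi (a 1)) (H.inv_mem hi)
    simp only [a_mul_xa, inv_a, xa_mul_a, inv_xa, xa_mul_xa] at h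
    convert h using 2
    linear_combination -(natCast_add_self (n := n))
  have h_a1 : a 1 ∈ H := by
    obtain ⟨m, hm⟩ := hodd
    have h_pow : (a 1 : QuaternionGroup n) = a 1 ^ (2 * m + 1) * ((a 1 ^ 2) ^ m)⁻¹ := by group
    rw [h_pow]
    refine H.mul_mem ?_ (H.inv_mem (H.pow_mem ?_ m))
    · simpa [← hm] using h_an
    · simpa using h_a2
  rw [eq_top_iff]
  rintro (k | k) -
  · exact zpowers_le.mpr h_a1 (a_mem_zpowers_a_one k)
  · simpa [a_mul_xa] using H.mul_mem (zpowers_le.mpr h_a1 (a_mem_zpowers_a_one (i - k))) hi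

theorem le_zpowers_a_one_of_normal (hodd : Odd n) (hN : H.Normal) (hH : H ≠ ⊤) :
    H ≤ zpowers (a 1) := by
  have : NeZero n := ⟨hodd.pos.ne'⟩
  rintro (k | k) hk
  · exact a_mem_zpowers_a_one k
  · exact absurd (eq_top_of_xa_mem hodd hN hk) hH

theorem KG_eq_setOf_div_two_add_one (hodd : Odd n) :
    KG (QuaternionGroup n) = {m | ∃ d, d ∣ 2 * n ∧ m = d / 2 + 1} := by
  have : NeZero n := ⟨hodd.pos.ne'⟩
  ext m
  constructor
  · rintro ⟨H, hN, hH, rfl⟩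
    have hle := le_zpowers_a_one_of_normal hodd hN hH
    refine ⟨Nat.card H, ?_, ncc_eq_card_div_two_add_one hle⟩
    rw [← orderOf_a_one, ← Nat.card_zpowers]
    exact card_dvd_of_le hle
  · rintro ⟨d, hd, rfl⟩
    obtain ⟨H, hle, rfl⟩ := exists_le_zpowers_a_one_card_eq hd
    exact ⟨H, normal_of_le_zpowers_a_one hle, ne_top_of_le_zpowers_a_one hle,
      ncc_eq_card_div_two_add_one hle⟩

end QuaternionGroup

open QuaternionGroup in
theorem quaternion_odd_decomposable_general (n : ℕ) (hodd : Odd n) :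
    (∀ H : Subgroup (QuaternionGroup n), H.Normal → H ≠ ⊤ →
      H ≤ Subgroup.zpowers (a (1 : ZMod (2 * n)))) ∧
    XDecomposable (QuaternionGroup n)
      ({m : ℕ | ∃ d : ℕ, d ∣ n ∧ Odd d ∧ m = (d + 1) / 2} ∪
       {m : ℕ | ∃ d : ℕ, d ∣ 2 * n ∧ Even d ∧ m = (d + 2) / 2}) :=
  ⟨fun _ hN hH => le_zpowers_a_one_of_normal hodd hN hH,
    (KG_eq_setOf_div_two_add_one hodd).trans (setOf_div_two_add_one_of_dvd_two_mul n)⟩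

open QuaternionGroup in
/-- For odd `n ≥ 3`, every proper normal subgroup of `Q_{4n}` is contained in `⟨a⟩`, and
`Q_{4n}` is `X`-decomposable for
`X = {(d+1)/2 : d ∣ n, d odd} ∪ {(d+2)/2 : d ∣ 2n, d even}`. -/
theorem quaternion_odd_decomposable (n : ℕ) (hn : 3 ≤ n) (hodd : Odd n) :
    (∀ H : Subgroup (QuaternionGroup n), H.Normal → H ≠ ⊤ →
      H ≤ Subgroup.zpowers (a (1 : ZMod (2 * n)))) ∧
    XDecomposable (QuaternionGroup n)
      ({m : ℕ | ∃ d : ℕ, d ∣ n ∧ Odd d ∧ m = (d + 1) / 2} ∪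
       {m : ℕ | ∃ d : ℕ, d ∣ 2 * n ∧ Even d ∧ m = (d + 2) / 2}) :=
  quaternion_odd_decomposable_general n hodd
end

section
/- Let n ≥ 2 be even and let Q_{4n} be the generalized quaternion group of order 4n. Then the normal subgroups ⟨a², b⟩ and ⟨a², ab⟩ are both (n+4)/2-decomposable, and Q_{4n} is Y-decomposable, where Y = {(d+1)/2 : d | n, d odd} ∪ {(d+2)/2 : d | 2n, d even} ∪ {(n+4)/2}. -/
open QuaternionGroup

namespace QGaux

variable {n : ℕ}

/-- parity ring hom -/
def pr (n : ℕ) : ZMod (2 * n) →+* ZMod 2 := ZMod.castHom ⟨n, rfl⟩ (ZMod 2)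

lemma pr_natCast (m : ℕ) : pr n ((m : ℕ) : ZMod (2*n)) = (m : ZMod 2) := map_natCast _ m

lemma zmod2_cases (x : ZMod 2) : x = 0 ∨ x = 1 := by revert x; decide

lemma nn_zero : (n : ZMod (2*n)) + (n : ZMod (2*n)) = 0 := by
  rw [← Nat.cast_add, ← two_mul]; exact ZMod.natCast_self _

lemma two_cast : ((2:ℕ) : ZMod (2*n)) = 2 := by push_cast; ring

lemma pr_two_mul (k : ZMod (2*n)) : pr n (2 * k) = 0 := by
  rw [← two_cast, map_mul, pr_natCast]
  have : ((2:ℕ) : ZMod 2) = 0 := by decide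
  rw [this, zero_mul]

lemma exists_eq_two_mul_iff [NeZero n] (x : ZMod (2*n)) :
    (∃ k, x = 2 * k) ↔ pr n x = 0 := by
  constructor
  · rintro ⟨k, rfl⟩
    exact pr_two_mul k
  · intro h
    have hx : ((x.val : ℕ) : ZMod 2) = 0 := by
      rw [← pr_natCast (n := n), ZMod.natCast_zmod_val]; exact h
    rw [ZMod.natCast_eq_zero_iff] at hx
    obtain ⟨m, hm⟩ := hx
    exact ⟨m, by rw [← ZMod.natCast_zmod_val x, hm]; push_cast; ring⟩

@[simp] lemma a_inv (i : ZMod (2*n)) : (a i : QuaternionGroup n)⁻¹ = a (-i) := rfl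
@[simp] lemma xa_inv (i : ZMod (2*n)) : (xa i : QuaternionGroup n)⁻¹ = xa ((n : ZMod (2*n)) + i) := rfl

lemma isConj_a_a_iff {i j : ZMod (2*n)} :
    IsConj (a i : QuaternionGroup n) (a j) ↔ j = i ∨ j = -i := by
  rw [isConj_iff]
  constructor
  · rintro ⟨(k | k), hk⟩
    · left
      simp only [a_mul_a, a_inv] at hk
      have h : k + i + -k = j := by injection hk
      linear_combination -h
    · right
      simp only [xa_mul_a, xa_mul_xa, xa_inv] at hk
      have h : (n : ZMod (2*n)) + ((n : ZMod (2*n)) + k) - (k + i) = j := by injection hk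
      linear_combination -h + nn_zero (n := n)
  · rintro (rfl | rfl)
    · exact ⟨a 0, by simp⟩
    · refine ⟨xa 0, ?_⟩
      simp only [xa_mul_a, xa_mul_xa, xa_inv]
      congr 1
      linear_combination nn_zero (n := n)

lemma not_isConj_a_xa (i j : ZMod (2*n)) : ¬ IsConj (a i : QuaternionGroup n) (xa j) := by
  rw [isConj_iff]
  rintro ⟨(k | k), hk⟩ <;> simp only [a_mul_a, a_inv, xa_mul_a, xa_mul_xa, xa_inv] at hk <;> cases hk

lemma isConj_xa_xa_iff {i j : ZMod (2*n)} :
    IsConj (xa i : QuaternionGroup n) (xa j) ↔ ∃ k, j = i + 2 * k := by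
  rw [isConj_iff]
  constructor
  · rintro ⟨(k | k), hk⟩
    · simp only [a_mul_xa, xa_mul_a, a_inv] at hk
      have h : i - k + -k = j := by injection hk
      exact ⟨-k, by linear_combination -h⟩
    · simp only [xa_mul_xa, a_mul_xa, xa_inv] at hk
      have h : (n : ZMod (2*n)) + k - ((n : ZMod (2*n)) + i - k) = j := by injection hk
      exact ⟨k - i, by linear_combination -h⟩
  · rintro ⟨k, rfl⟩
    refine ⟨a (-k), ?_⟩
    simp only [a_mul_xa, xa_mul_a, a_inv, neg_neg]
    congr 1
    ring

lemma ncc_eq_card_image {G : Type*} [Group G] (A : Subgroup G) (hA : A.Normal) :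
    ncc A = Nat.card (ConjClasses.mk '' (A : Set G)) := by
  have hset : {c : ConjClasses G | c.carrier ⊆ (A : Set G)} = ConjClasses.mk '' (A : Set G) := by
    ext c
    constructor
    · intro h
      obtain ⟨g, rfl⟩ := ConjClasses.mk_surjective c
      exact ⟨g, h ConjClasses.mem_carrier_mk, rfl⟩
    · rintro ⟨g, hg, rfl⟩ x hx
      rw [ConjClasses.mem_carrier_iff_mk_eq, ConjClasses.mk_eq_mk_iff_isConj] at hx
      obtain ⟨c, hc⟩ := isConj_iff.mp hx.symm
      rw [← hc]
      exact hA.conj_mem g hg c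
  exact Nat.card_congr (Equiv.setCongr hset)

def aSub (n : ℕ) (S : AddSubgroup (ZMod (2*n))) : Subgroup (QuaternionGroup n) where
  carrier := {x | ∃ i ∈ S, x = a i}
  one_mem' := ⟨0, S.zero_mem, rfl⟩
  mul_mem' := by
    rintro x y ⟨i, hi, rfl⟩ ⟨j, hj, rfl⟩
    exact ⟨i + j, S.add_mem hi hj, rfl⟩
  inv_mem' := by
    rintro x ⟨i, hi, rfl⟩
    exact ⟨-i, S.neg_mem hi, rfl⟩

lemma mem_aSub_iff {S : AddSubgroup (ZMod (2*n))} {x : QuaternionGroup n} :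
    x ∈ aSub n S ↔ ∃ i ∈ S, x = a i := Iff.rfl

lemma a_mem_aSub_iff {S : AddSubgroup (ZMod (2*n))} {i : ZMod (2*n)} :
    (a i : QuaternionGroup n) ∈ aSub n S ↔ i ∈ S := by
  constructor
  · rintro ⟨j, hj, hji⟩
    obtain rfl : j = i := by injection hji.symm
    exact hj
  · intro h
    exact ⟨i, h, rfl⟩

lemma xa_notMem_aSub {S : AddSubgroup (ZMod (2*n))} (i : ZMod (2*n)) :
    (xa i : QuaternionGroup n) ∉ aSub n S := by
  rintro ⟨j, hj, hji⟩
  cases hji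

lemma aSub_normal (S : AddSubgroup (ZMod (2*n))) : (aSub n S).Normal := by
  constructor
  rintro x ⟨i, hi, rfl⟩ (k | k)
  · refine ⟨i, hi, ?_⟩
    simp only [a_mul_a, a_inv]
    congr 1
    ring
  · refine ⟨-i, S.neg_mem hi, ?_⟩
    simp only [xa_mul_a, xa_mul_xa, xa_inv]
    congr 1
    linear_combination nn_zero (n := n)

lemma aSub_ne_top (S : AddSubgroup (ZMod (2*n))) : aSub n S ≠ ⊤ := by
  intro h
  exact xa_notMem_aSub (0 : ZMod (2*n)) (h ▸ Subgroup.mem_top _)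

lemma card_aSub (S : AddSubgroup (ZMod (2*n))) : Nat.card (aSub n S) = Nat.card S := by
  apply Nat.card_congr
  refine (Equiv.ofBijective (fun i : S => (⟨a i, ⟨i, i.2, rfl⟩⟩ : aSub n S)) ⟨?_, ?_⟩).symm
  · intro i j h
    have h2 : (a i : QuaternionGroup n) = a j := congrArg Subtype.val h
    exact Subtype.ext (by injection h2)
  · rintro ⟨x, i, hi, rfl⟩
    exact ⟨⟨i, hi⟩, rfl⟩

lemma card_mk_image_aSub [NeZero n] (S : AddSubgroup (ZMod (2*n))) :
    Nat.card (ConjClasses.mk '' ((aSub n S : Set (QuaternionGroup n)))) = Nat.card S / 2 + 1 := by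
  obtain ⟨g, hg⟩ := IsAddCyclic.exists_generator (α := S)
  set d := Nat.card S with hd
  have hd0 : 0 < d := Nat.card_pos
  have hord : addOrderOf g = d := by
    have htop : AddSubgroup.zmultiples g = (⊤ : AddSubgroup S) := by
      rw [AddSubgroup.eq_top_iff']
      exact hg
    rw [← Nat.card_zmultiples, htop, hd]
    exact Nat.card_congr AddSubgroup.topEquiv.toEquiv
  have hdg : d • g = 0 := by rw [← hord]; exact addOrderOf_nsmul_eq_zero g
  set F : ℕ → ConjClasses (QuaternionGroup n) :=
    fun k => ConjClasses.mk (a ((k • g : S) : ZMod (2*n))) with hF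
  have himg : ConjClasses.mk '' ((aSub n S : Set (QuaternionGroup n))) = F '' (Set.Iic (d/2)) := by
    ext c
    simp only [Set.mem_image]
    constructor
    · rintro ⟨x, ⟨i, hi, rfl⟩, rfl⟩
      have hex : ∃ k : ℕ, k < d ∧ (k • g : S) = ⟨i, hi⟩ := by
        obtain ⟨z, hz⟩ := hg ⟨i, hi⟩
        refine ⟨(z % (d : ℤ)).toNat, ?_, ?_⟩
        · have h1 := Int.emod_lt_of_pos z (b := (d : ℤ)) (by exact_mod_cast hd0)
          have h2 := Int.toNat_of_nonneg (Int.emod_nonneg z (show (d:ℤ) ≠ 0 by exact_mod_cast hd0.ne'))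
          omega
        · have hkz : (((z % (d : ℤ)).toNat : ℕ) : ℤ) = z % (d : ℤ) :=
            Int.toNat_of_nonneg (Int.emod_nonneg z (show (d:ℤ) ≠ 0 by exact_mod_cast hd0.ne'))
          rw [← hz]
          have hdvd : ((addOrderOf g : ℤ)) ∣ (((z % (d : ℤ)).toNat : ℕ) : ℤ) - z := by
            rw [hord, hkz]
            refine ⟨-(z / (d : ℤ)), ?_⟩
            have h2 := Int.emod_add_mul_ediv z (d : ℤ)
            linarith
          have h0 : ((((z % (d : ℤ)).toNat : ℕ) : ℤ) - z) • g = 0 :=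
            addOrderOf_dvd_iff_zsmul_eq_zero.mp hdvd
          have h2 : ((((z % (d : ℤ)).toNat : ℕ) : ℤ) - z) • g + z • g = z • g := by
            rw [h0, zero_add]
          have h1 : ((((z % (d : ℤ)).toNat : ℕ) : ℤ)) • g = z • g := by
            rwa [← add_zsmul, sub_add_cancel] at h2
          rw [← natCast_zsmul]
          exact h1
      obtain ⟨k, hkd, hksmul⟩ := hex
      by_cases hkle : k ≤ d / 2
      · refine ⟨k, hkle, ?_⟩
        rw [hF]
        simp only [hksmul]
      · refine ⟨d - k, by simp only [Set.mem_Iic]; omega, ?_⟩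
        have hlk : (d - k) • g = -(k • g) := by
          rw [eq_neg_iff_add_eq_zero, ← add_nsmul]
          have : d - k + k = d := by omega
          rw [this, hdg]
        rw [hF]
        simp only [hlk, hksmul]
        rw [ConjClasses.mk_eq_mk_iff_isConj]
        have hcoe : ((-(⟨i, hi⟩ : S) : S) : ZMod (2*n)) = -i := rfl
        rw [hcoe, isConj_a_a_iff]
        right; rw [neg_neg]
    · rintro ⟨k, _, rfl⟩
      exact ⟨a ((k • g : S) : ZMod (2*n)), ⟨_, (k • g).2, rfl⟩, rfl⟩
  have hinj : Set.InjOn F (Set.Iic (d/2)) := by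
    intro k hk l hl h
    simp only [Set.mem_Iic] at hk hl
    rw [hF] at h
    simp only at h
    rw [ConjClasses.mk_eq_mk_iff_isConj, isConj_a_a_iff] at h
    rcases h with h | h
    · have hS : (l • g : S) = k • g := Subtype.ext h
      have hinj2 := nsmul_injOn_Iio_addOrderOf (x := g)
      rw [hord] at hinj2
      exact (hinj2 (by simp only [Set.mem_Iio]; omega) (by simp only [Set.mem_Iio]; omega) hS).symm
    · have hS : l • g + k • g = 0 := by
        have : (l • g : S) = -(k • g) := Subtype.ext (by rw [h]; rfl)
        rw [this, neg_add_cancel]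
      rw [← add_nsmul] at hS
      have hdvd : d ∣ l + k := by
        rw [← hord]
        exact addOrderOf_dvd_of_nsmul_eq_zero hS
      have hle : l + k ≤ d := by omega
      rcases hdvd with ⟨c, hc⟩
      rcases Nat.lt_or_ge c 2 with h2 | h2
      · interval_cases c <;> omega
      · have h3 := Nat.mul_le_mul_left d h2
        omega
  rw [himg, Nat.card_coe_set_eq, Set.ncard_image_of_injOn hinj, ← Finset.coe_Iic,
    Set.ncard_coe_finset, Nat.card_Iic]

lemma zmod2_neg (x : ZMod 2) : -x = x := by revert x; decide

def evenSub (n : ℕ) : AddSubgroup (ZMod (2*n)) where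
  carrier := {i | pr n i = 0}
  zero_mem' := map_zero _
  add_mem' := by
    intro x y hx hy
    simp only [Set.mem_setOf_eq] at *
    rw [map_add, hx, hy, add_zero]
  neg_mem' := by
    intro x hx
    simp only [Set.mem_setOf_eq] at *
    rw [map_neg, hx, neg_zero]

lemma mem_evenSub {i : ZMod (2*n)} : i ∈ evenSub n ↔ pr n i = 0 := Iff.rfl

lemma card_evenSub [NeZero n] : Nat.card (evenSub n) = n := by
  have he : evenSub n = AddSubgroup.zmultiples (2 : ZMod (2*n)) := by
    ext x
    rw [mem_evenSub, AddSubgroup.mem_zmultiples_iff]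
    constructor
    · intro h
      obtain ⟨k, rfl⟩ := (exists_eq_two_mul_iff x).mpr h
      refine ⟨(k.val : ℤ), ?_⟩
      rw [zsmul_eq_mul]
      push_cast
      rw [ZMod.natCast_zmod_val]
      ring
    · rintro ⟨z, rfl⟩
      rw [← (exists_eq_two_mul_iff _)]
      refine ⟨(z : ZMod (2*n)), ?_⟩
      rw [zsmul_eq_mul]; ring
  have h2n : 2*n ≠ 0 := NeZero.ne _
  rw [he, Nat.card_zmultiples, ← two_cast, ZMod.addOrderOf_coe _ h2n,
    Nat.gcd_eq_right ⟨n, rfl⟩]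
  omega

def mixedSub (n : ℕ) (hn : ((n:ℕ) : ZMod 2) = 0) (ε : ZMod 2) : Subgroup (QuaternionGroup n) where
  carrier := QuaternionGroup.a '' {i | pr n i = 0} ∪ QuaternionGroup.xa '' {i | pr n i = ε}
  one_mem' := Or.inl ⟨0, map_zero _, rfl⟩
  mul_mem' := by
    have hn' : pr n ((n : ℕ) : ZMod (2*n)) = 0 := by rw [pr_natCast]; exact hn
    rintro x y (⟨i, hi, rfl⟩ | ⟨i, hi, rfl⟩) (⟨j, hj, rfl⟩ | ⟨j, hj, rfl⟩)
    · exact Or.inl ⟨i + j, by rw [Set.mem_setOf_eq, map_add, hi, hj, add_zero], rfl⟩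
    · exact Or.inr ⟨j - i, by rw [Set.mem_setOf_eq, map_sub, hi, hj, sub_zero], rfl⟩
    · exact Or.inr ⟨i + j, by rw [Set.mem_setOf_eq, map_add, hi, hj, add_zero], rfl⟩
    · exact Or.inl ⟨(n : ZMod (2*n)) + j - i,
        by rw [Set.mem_setOf_eq, map_sub, map_add, hn', hi, hj, zero_add, sub_self], rfl⟩
  inv_mem' := by
    have hn' : pr n ((n : ℕ) : ZMod (2*n)) = 0 := by rw [pr_natCast]; exact hn
    rintro x (⟨i, hi, rfl⟩ | ⟨i, hi, rfl⟩)
    · exact Or.inl ⟨-i, by rw [Set.mem_setOf_eq, map_neg, hi, neg_zero], rfl⟩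
    · exact Or.inr ⟨(n : ZMod (2*n)) + i, by rw [Set.mem_setOf_eq, map_add, hn', hi, zero_add], rfl⟩

lemma a_mem_mixedSub {hn : ((n:ℕ) : ZMod 2) = 0} {ε : ZMod 2} {i : ZMod (2*n)} :
    (a i : QuaternionGroup n) ∈ mixedSub n hn ε ↔ pr n i = 0 := by
  constructor
  · rintro (⟨j, hj, hji⟩ | ⟨j, hj, hji⟩)
    · obtain rfl : j = i := by injection hji
      exact hj
    · cases hji
  · intro h
    exact Or.inl ⟨i, h, rfl⟩

lemma xa_mem_mixedSub {hn : ((n:ℕ) : ZMod 2) = 0} {ε : ZMod 2} {i : ZMod (2*n)} :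
    (xa i : QuaternionGroup n) ∈ mixedSub n hn ε ↔ pr n i = ε := by
  constructor
  · rintro (⟨j, hj, hji⟩ | ⟨j, hj, hji⟩)
    · cases hji
    · obtain rfl : j = i := by injection hji
      exact hj
  · intro h
    exact Or.inr ⟨i, h, rfl⟩

lemma mixedSub_normal (hn : ((n:ℕ) : ZMod 2) = 0) (ε : ZMod 2) : (mixedSub n hn ε).Normal := by
  constructor
  intro x hx g
  cases x with
  | a i =>
    rw [a_mem_mixedSub] at hx
    cases g with
    | a k =>
      have he : (a k : QuaternionGroup n) * a i * (a k)⁻¹ = a (k + i + -k) := rfl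
      rw [he, a_mem_mixedSub]
      have h2 : k + i + -k = i := by ring
      rw [h2]; exact hx
    | xa k =>
      have he : (xa k : QuaternionGroup n) * a i * (xa k)⁻¹
          = a ((n : ZMod (2*n)) + ((n : ZMod (2*n)) + k) - (k + i)) := rfl
      rw [he, a_mem_mixedSub]
      have h2 : (n : ZMod (2*n)) + ((n : ZMod (2*n)) + k) - (k + i)
          = -i + ((n : ZMod (2*n)) + (n : ZMod (2*n))) := by ring
      rw [h2, nn_zero, add_zero, map_neg, hx, neg_zero]
  | xa i =>
    rw [xa_mem_mixedSub] at hx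
    cases g with
    | a k =>
      have he : (a k : QuaternionGroup n) * xa i * (a k)⁻¹ = xa (i - k + -k) := rfl
      rw [he, xa_mem_mixedSub]
      have h2 : i - k + -k = i - 2 * k := by ring
      rw [h2, map_sub, pr_two_mul, hx, sub_zero]
    | xa k =>
      have he : (xa k : QuaternionGroup n) * xa i * (xa k)⁻¹
          = xa (((n : ZMod (2*n)) + k) - ((n : ZMod (2*n)) + i - k)) := rfl
      rw [he, xa_mem_mixedSub]
      have h2 : ((n : ZMod (2*n)) + k) - ((n : ZMod (2*n)) + i - k) = 2 * k - i := by ring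
      rw [h2, map_sub, pr_two_mul, zero_sub, hx, zmod2_neg]

lemma mixedSub_ne_top (hn : ((n:ℕ) : ZMod 2) = 0) (ε : ZMod 2) : mixedSub n hn ε ≠ ⊤ := by
  intro h
  have h1 : (a 1 : QuaternionGroup n) ∈ mixedSub n hn ε := h ▸ Subgroup.mem_top _
  rw [a_mem_mixedSub, map_one] at h1
  exact one_ne_zero h1

lemma mk_image_mixedSub [NeZero n] (hn : ((n:ℕ) : ZMod 2) = 0) (ε : ZMod 2) (x0 : ZMod (2*n))
    (hx0 : pr n x0 = ε) :
    ConjClasses.mk '' ((mixedSub n hn ε : Set (QuaternionGroup n))) =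
      insert (ConjClasses.mk (xa x0))
        (ConjClasses.mk '' ((aSub n (evenSub n) : Set (QuaternionGroup n)))) := by
  ext c
  constructor
  · rintro ⟨x, hx, rfl⟩
    cases x with
    | a i =>
      exact Set.mem_insert_of_mem _ ⟨a i, ⟨i, a_mem_mixedSub.mp hx, rfl⟩, rfl⟩
    | xa i =>
      apply Set.mem_insert_iff.mpr
      left
      rw [ConjClasses.mk_eq_mk_iff_isConj, isConj_xa_xa_iff]
      have h : pr n (x0 - i) = 0 := by
        rw [map_sub, hx0, xa_mem_mixedSub.mp hx, sub_self]
      obtain ⟨k, hk⟩ := (exists_eq_two_mul_iff _).mpr h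
      exact ⟨k, by linear_combination hk⟩
  · intro hc
    rcases Set.mem_insert_iff.mp hc with rfl | ⟨x, ⟨i, hi, rfl⟩, rfl⟩
    · exact ⟨xa x0, xa_mem_mixedSub.mpr hx0, rfl⟩
    · exact ⟨a i, a_mem_mixedSub.mpr hi, rfl⟩

lemma ncc_mixedSub [NeZero n] (hn : ((n:ℕ) : ZMod 2) = 0) (ε : ZMod 2) (x0 : ZMod (2*n))
    (hx0 : pr n x0 = ε) :
    ncc (mixedSub n hn ε) = n / 2 + 2 := by
  have hnot : ConjClasses.mk (xa x0 : QuaternionGroup n)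
      ∉ ConjClasses.mk '' ((aSub n (evenSub n) : Set (QuaternionGroup n))) := by
    rintro ⟨x, ⟨i, hi, rfl⟩, hmk⟩
    rw [ConjClasses.mk_eq_mk_iff_isConj] at hmk
    exact not_isConj_a_xa i x0 hmk
  rw [ncc_eq_card_image _ (mixedSub_normal hn ε), mk_image_mixedSub hn ε x0 hx0,
    Nat.card_coe_set_eq, Set.ncard_insert_of_notMem hnot,
    ← Nat.card_coe_set_eq, card_mk_image_aSub, card_evenSub]

lemma ncc_aSub [NeZero n] (S : AddSubgroup (ZMod (2*n))) :
    ncc (aSub n S) = Nat.card S / 2 + 1 := by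
  rw [ncc_eq_card_image _ (aSub_normal S), card_mk_image_aSub]

lemma a_pow_val [NeZero n] (k : ZMod (2*n)) : (a 1 : QuaternionGroup n) ^ k.val = a k := by
  rw [a_one_pow, ZMod.natCast_zmod_val]

lemma a_two : (a 2 : QuaternionGroup n) = a 1 ^ 2 := by
  rw [a_one_pow, two_cast]

lemma a_even_mem [NeZero n] {A : Subgroup (QuaternionGroup n)} (h2 : (a 2 : QuaternionGroup n) ∈ A)
    {j : ZMod (2*n)} (hj : pr n j = 0) : (a j : QuaternionGroup n) ∈ A := by
  obtain ⟨k, rfl⟩ := (exists_eq_two_mul_iff j).mpr hj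
  have h := A.pow_mem h2 k.val
  have he : (a 2 : QuaternionGroup n) ^ k.val = a (2 * k) := by
    rw [a_two, ← pow_mul, a_one_pow]
    congr 1
    push_cast
    rw [ZMod.natCast_zmod_val]
  rwa [he] at h

lemma eq_top_of_a_one_mem [NeZero n] {A : Subgroup (QuaternionGroup n)}
    (h1 : (a 1 : QuaternionGroup n) ∈ A) {i0 : ZMod (2*n)}
    (hx : (xa i0 : QuaternionGroup n) ∈ A) : A = ⊤ := by
  rw [Subgroup.eq_top_iff']
  have ha : ∀ m : ZMod (2*n), (a m : QuaternionGroup n) ∈ A := fun m => by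
    have h := A.pow_mem h1 m.val
    rwa [a_pow_val] at h
  intro x
  cases x with
  | a m => exact ha m
  | xa m =>
    have h := A.mul_mem hx (ha (m - i0))
    rwa [xa_mul_a, add_sub_cancel] at h

lemma a_one_mem_of_odd [NeZero n] {A : Subgroup (QuaternionGroup n)}
    (h2 : (a 2 : QuaternionGroup n) ∈ A) {j : ZMod (2*n)}
    (hj : (a j : QuaternionGroup n) ∈ A) (hodd : pr n j = 1) :
    (a 1 : QuaternionGroup n) ∈ A := by
  have h : pr n (j - 1) = 0 := by rw [map_sub, hodd, map_one, sub_self]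
  have h3 := A.mul_mem hj (A.inv_mem (a_even_mem h2 h))
  simp only [a_inv, a_mul_a] at h3
  have he : j + -(j - 1) = 1 := by ring
  rwa [he] at h3

lemma classification [NeZero n] (hn2 : ((n:ℕ) : ZMod 2) = 0) {A : Subgroup (QuaternionGroup n)}
    (hN : A.Normal) (hT : A ≠ ⊤) :
    (∃ S, A = aSub n S) ∨ A = mixedSub n hn2 0 ∨ A = mixedSub n hn2 1 := by
  by_cases hxa : ∃ i, (xa i : QuaternionGroup n) ∈ A
  · right
    obtain ⟨i, hi⟩ := hxa
    have h2 : (a 2 : QuaternionGroup n) ∈ A := by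
      have hconj := hN.conj_mem _ hi (a 1)
      have he : (a 1 : QuaternionGroup n) * xa i * (a 1)⁻¹ = xa (i - 1 + -1) := rfl
      rw [he] at hconj
      have h3 := A.mul_mem hconj (A.inv_mem hi)
      have he2 : (xa (i - 1 + -1) : QuaternionGroup n) * (xa i)⁻¹
          = a ((n : ZMod (2*n)) + ((n : ZMod (2*n)) + i) - (i - 1 + -1)) := rfl
      rw [he2] at h3
      have he3 : (n : ZMod (2*n)) + ((n : ZMod (2*n)) + i) - (i - 1 + -1)
          = 2 + ((n : ZMod (2*n)) + (n : ZMod (2*n))) := by ring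
      rwa [he3, nn_zero, add_zero] at h3
    have haeven : ∀ j : ZMod (2*n), (a j : QuaternionGroup n) ∈ A → pr n j = 0 := by
      intro j hj
      rcases zmod2_cases (pr n j) with h | h
      · exact h
      · exact absurd (eq_top_of_a_one_mem (a_one_mem_of_odd h2 hj h) hi) hT
    have hxapar : ∀ j : ZMod (2*n), (xa j : QuaternionGroup n) ∈ A → pr n j = pr n i := by
      intro j hj
      by_contra hne
      have hd : (a (j - i) : QuaternionGroup n) ∈ A := by
        have h3 := A.mul_mem hj (A.inv_mem hi)
        have he : (xa j : QuaternionGroup n) * (xa i)⁻¹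
            = a ((n : ZMod (2*n)) + ((n : ZMod (2*n)) + i) - j) := rfl
        rw [he] at h3
        have he2 : (n : ZMod (2*n)) + ((n : ZMod (2*n)) + i) - j
            = (i - j) + ((n : ZMod (2*n)) + (n : ZMod (2*n))) := by ring
        rw [he2, nn_zero, add_zero] at h3
        have h4 := A.inv_mem h3
        rw [a_inv] at h4
        have he3 : -(i - j) = j - i := by ring
        rwa [he3] at h4
      have hodd : pr n (j - i) = 1 := by
        rcases zmod2_cases (pr n (j - i)) with h | h
        · exfalso
          apply hne
          rw [map_sub] at h
          exact sub_eq_zero.mp h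
        · exact h
      exact absurd (eq_top_of_a_one_mem (a_one_mem_of_odd h2 hd hodd) hi) hT
    have hA : A = mixedSub n hn2 (pr n i) := by
      ext x
      cases x with
      | a j =>
        rw [a_mem_mixedSub]
        exact ⟨haeven j, fun h => a_even_mem h2 h⟩
      | xa j =>
        rw [xa_mem_mixedSub]
        constructor
        · exact hxapar j
        · intro h
          have hs : pr n (j - i) = 0 := by rw [map_sub, h, sub_self]
          have h3 := A.mul_mem hi (a_even_mem h2 hs)
          rwa [xa_mul_a, add_sub_cancel] at h3
    rcases zmod2_cases (pr n i) with h | h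
    · left; rwa [h] at hA
    · right; rwa [h] at hA
  · left
    push_neg at hxa
    refine ⟨{ carrier := {j | (a j : QuaternionGroup n) ∈ A},
              zero_mem' := by
                have := A.one_mem
                rwa [one_def] at this,
              add_mem' := ?_, neg_mem' := ?_ }, ?_⟩
    · intro x y hx hy
      have h := A.mul_mem hx hy
      rwa [a_mul_a] at h
    · intro x hx
      have h := A.inv_mem hx
      rwa [a_inv] at h
    · ext x
      cases x with
      | a j =>
        rw [a_mem_aSub_iff]
        exact Iff.rfl
      | xa j =>
        constructor
        · intro h; exact absurd h (hxa j)
        · intro h; exact absurd h (xa_notMem_aSub j)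

lemma closure_eq_mixed0 [NeZero n] (hn2 : ((n:ℕ) : ZMod 2) = 0) :
    Subgroup.closure {(a 1 : QuaternionGroup n) ^ 2, xa 0} = mixedSub n hn2 0 := by
  have hc2 : (a 2 : QuaternionGroup n) ∈ Subgroup.closure {(a 1 : QuaternionGroup n) ^ 2, xa 0} := by
    rw [a_two]
    exact Subgroup.subset_closure (Set.mem_insert _ _)
  have hcxa : (xa 0 : QuaternionGroup n) ∈ Subgroup.closure {(a 1 : QuaternionGroup n) ^ 2, xa 0} :=
    Subgroup.subset_closure (Set.mem_insert_of_mem _ rfl)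
  apply le_antisymm
  · rw [Subgroup.closure_le]
    intro x hx
    rcases Set.mem_insert_iff.mp hx with rfl | hx
    · rw [SetLike.mem_coe, ← a_two, a_mem_mixedSub]
      have h := pr_two_mul (n := n) 1
      rwa [mul_one] at h
    · rcases Set.mem_singleton_iff.mp hx with rfl
      rw [SetLike.mem_coe, xa_mem_mixedSub]
      exact map_zero _
  · intro x hx
    cases x with
    | a j =>
      rw [a_mem_mixedSub] at hx
      exact a_even_mem hc2 hx
    | xa j =>
      rw [xa_mem_mixedSub] at hx
      have h3 := Subgroup.mul_mem _ hcxa (a_even_mem hc2 hx)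
      rwa [xa_mul_a, zero_add] at h3

lemma closure_eq_mixed1 [NeZero n] (hn2 : ((n:ℕ) : ZMod 2) = 0) :
    Subgroup.closure {(a 1 : QuaternionGroup n) ^ 2, a 1 * xa 0} = mixedSub n hn2 1 := by
  have hgen : (a 1 : QuaternionGroup n) * xa 0 = xa (0 - 1) := rfl
  have hpr : pr n ((0 : ZMod (2*n)) - 1) = 1 := by
    rw [map_sub, map_zero, map_one]
    decide
  have hc2 : (a 2 : QuaternionGroup n)
      ∈ Subgroup.closure {(a 1 : QuaternionGroup n) ^ 2, a 1 * xa 0} := by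
    rw [a_two]
    exact Subgroup.subset_closure (Set.mem_insert _ _)
  have hcxa : (xa (0 - 1) : QuaternionGroup n)
      ∈ Subgroup.closure {(a 1 : QuaternionGroup n) ^ 2, a 1 * xa 0} := by
    rw [← hgen]
    exact Subgroup.subset_closure (Set.mem_insert_of_mem _ rfl)
  apply le_antisymm
  · rw [Subgroup.closure_le]
    intro x hx
    rcases Set.mem_insert_iff.mp hx with rfl | hx
    · rw [SetLike.mem_coe, ← a_two, a_mem_mixedSub]
      have h := pr_two_mul (n := n) 1
      rwa [mul_one] at h
    · rcases Set.mem_singleton_iff.mp hx with rfl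
      rw [SetLike.mem_coe, hgen, xa_mem_mixedSub]
      exact hpr
  · intro x hx
    cases x with
    | a j =>
      rw [a_mem_mixedSub] at hx
      exact a_even_mem hc2 hx
    | xa j =>
      rw [xa_mem_mixedSub] at hx
      have hs : pr n (j - (0 - 1)) = 0 := by rw [map_sub, hx, hpr, sub_self]
      have h3 := Subgroup.mul_mem _ hcxa (a_even_mem hc2 hs)
      rwa [xa_mul_a, add_sub_cancel] at h3

lemma card_zmultiples_div [NeZero n] {d : ℕ} (hd : d ∣ 2*n) (hd0 : d ≠ 0) :
    Nat.card (AddSubgroup.zmultiples ((2*n/d : ℕ) : ZMod (2*n))) = d := by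
  have h2n : 2*n ≠ 0 := NeZero.ne _
  rw [Nat.card_zmultiples, ZMod.addOrderOf_coe _ h2n,
    Nat.gcd_eq_right (Nat.div_dvd_of_dvd hd), Nat.div_div_self hd h2n]

end QGaux
open QuaternionGroup in
/-- For even `n ≥ 2`, the normal subgroups `⟨a², b⟩` and `⟨a², ab⟩` of `Q_{4n}` are both
`(n+4)/2`-decomposable, and `Q_{4n}` is `Y`-decomposable, where
`Y = {(d+1)/2 : d ∣ n, d odd} ∪ {(d+2)/2 : d ∣ 2n, d even} ∪ {(n+4)/2}`. -/
theorem quaternion_even_decomposable (n : ℕ) (hn : 2 ≤ n) (heven : Even n) :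
    ∀ a' b' : QuaternionGroup n, a' = a (1 : ZMod (2 * n)) → b' = xa (0 : ZMod (2 * n)) →
    ∀ H K : Subgroup (QuaternionGroup n),
      H = Subgroup.closure {a' ^ 2, b'} → K = Subgroup.closure {a' ^ 2, a' * b'} →
    (H.Normal ∧ K.Normal ∧ ncc H = (n + 4) / 2 ∧ ncc K = (n + 4) / 2) ∧
    XDecomposable (QuaternionGroup n)
      (({m : ℕ | ∃ d : ℕ, d ∣ n ∧ Odd d ∧ m = (d + 1) / 2} ∪
        {m : ℕ | ∃ d : ℕ, d ∣ 2 * n ∧ Even d ∧ m = (d + 2) / 2}) ∪ {(n + 4) / 2}) := by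
  intro a' b' ha' hb' H K hH hK
  haveI : NeZero n := ⟨by omega⟩
  obtain ⟨nh, hnh⟩ := heven
  have hn2 : ((n : ℕ) : ZMod 2) = 0 := by
    rw [ZMod.natCast_eq_zero_iff]
    exact ⟨nh, by omega⟩
  subst ha' hb' hH hK
  have hH' : Subgroup.closure {(a 1 : QuaternionGroup n) ^ 2, xa 0} = QGaux.mixedSub n hn2 0 :=
    QGaux.closure_eq_mixed0 hn2
  have hK' : Subgroup.closure {(a 1 : QuaternionGroup n) ^ 2, a 1 * xa 0}
      = QGaux.mixedSub n hn2 1 := QGaux.closure_eq_mixed1 hn2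
  have hncc0 : ncc (QGaux.mixedSub n hn2 0) = n / 2 + 2 :=
    QGaux.ncc_mixedSub hn2 0 0 (map_zero _)
  have hncc1 : ncc (QGaux.mixedSub n hn2 1) = n / 2 + 2 :=
    QGaux.ncc_mixedSub hn2 1 (0 - 1) (by rw [map_sub, map_zero, map_one]; decide)
  constructor
  · refine ⟨?_, ?_, ?_, ?_⟩
    · rw [hH']; exact QGaux.mixedSub_normal hn2 0
    · rw [hK']; exact QGaux.mixedSub_normal hn2 1
    · rw [hH', hncc0]; omega
    · rw [hK', hncc1]; omega
  · unfold XDecomposable KG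
    ext m
    simp only [Set.mem_union, Set.mem_setOf_eq, Set.mem_singleton_iff]
    constructor
    · rintro ⟨A, hN, hT, rfl⟩
      rcases QGaux.classification hn2 hN hT with ⟨S, rfl⟩ | rfl | rfl
      · rw [QGaux.ncc_aSub]
        have hdvd : Nat.card S ∣ 2 * n := by
          have h := AddSubgroup.card_addSubgroup_dvd_card S
          rwa [Nat.card_zmod] at h
        have hd0 : Nat.card S ≠ 0 := Nat.card_pos.ne'
        rcases Nat.even_or_odd (Nat.card S) with he | ho
        · obtain ⟨r, hr⟩ := he
          exact Or.inl (Or.inr ⟨Nat.card S, hdvd, ⟨r, hr⟩, by omega⟩)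
        · obtain ⟨r, hr⟩ := ho
          refine Or.inl (Or.inl ⟨Nat.card S, ?_, ⟨r, hr⟩, by omega⟩)
          have hcop : (Nat.card S).Coprime 2 := Nat.coprime_two_right.mpr ⟨r, hr⟩
          exact hcop.dvd_of_dvd_mul_left hdvd
      · rw [hncc0]; exact Or.inr (by omega)
      · rw [hncc1]; exact Or.inr (by omega)
    · rintro ((⟨d, hdn, hodd, rfl⟩ | ⟨d, hdn, hev, rfl⟩) | rfl)
      · have hd0 : d ≠ 0 := by
          rintro rfl
          exact absurd (Nat.eq_zero_of_zero_dvd hdn) (by omega)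
        have hd2n : d ∣ 2 * n := Dvd.dvd.mul_left hdn 2
        refine ⟨QGaux.aSub n (AddSubgroup.zmultiples ((2 * n / d : ℕ) : ZMod (2 * n))),
          QGaux.aSub_normal _, QGaux.aSub_ne_top _, ?_⟩
        rw [QGaux.ncc_aSub, QGaux.card_zmultiples_div hd2n hd0]
        obtain ⟨r, hr⟩ := hodd
        omega
      · have hd0 : d ≠ 0 := by
          rintro rfl
          exact absurd (Nat.eq_zero_of_zero_dvd hdn) (by omega)
        refine ⟨QGaux.aSub n (AddSubgroup.zmultiples ((2 * n / d : ℕ) : ZMod (2 * n))),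
          QGaux.aSub_normal _, QGaux.aSub_ne_top _, ?_⟩
        rw [QGaux.ncc_aSub, QGaux.card_zmultiples_div hdn hd0]
        obtain ⟨r, hr⟩ := hev
        omega
      · exact ⟨QGaux.mixedSub n hn2 0, QGaux.mixedSub_normal hn2 0,
          QGaux.mixedSub_ne_top hn2 0, by rw [hncc0]; omega⟩
end

section
/- Let G be a finite abelian group that is {1,2,3}-decomposable. Then G is isomorphic to Z₆, the cyclic group of order 6. -/
/-!
In an abelian group every conjugacy class is a singleton, so `ncc A` is just the order of `A` and
`KG G` is the set of orders of proper subgroups. Proper subgroups of orders 2 and 3 give elements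
of orders 2 and 3, whose product has order 6; since 6 is not the order of a proper subgroup, this
element generates `G`, so `G` is cyclic of order 6.
-/

theorem ConjClasses.carrier_mk_eq_singleton {α : Type*} [CommMonoid α] (a : α) :
    (ConjClasses.mk a).carrier = {a} := by
  ext b
  simp [mem_carrier_iff_mk_eq, mk_injective.eq_iff]

section CommGroup

variable {G : Type*} [CommGroup G]

theorem ncc_eq_natCard (A : Subgroup G) : ncc A = Nat.card A :=
  Nat.card_congr (ConjClasses.mkEquiv.subtypeEquiv fun g => by
    change g ∈ A ↔ (ConjClasses.mk g).carrier ⊆ A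
    rw [ConjClasses.carrier_mk_eq_singleton, Set.singleton_subset_iff, SetLike.mem_coe]).symm

theorem mem_KG_iff {n : ℕ} : n ∈ KG G ↔ ∃ A : Subgroup G, A ≠ ⊤ ∧ Nat.card A = n := by
  simp only [KG, Set.mem_ofPred_eq, ncc_eq_natCard]
  exact ⟨fun ⟨A, _, hA, hn⟩ => ⟨A, hA, hn⟩,
    fun ⟨A, hA, hn⟩ => ⟨A, Subgroup.normal_of_isMulCommutative A, hA, hn⟩⟩

theorem dvd_natCard_of_mem_KG {n : ℕ} (hn : n ∈ KG G) : n ∣ Nat.card G := by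
  obtain ⟨A, -, rfl⟩ := mem_KG_iff.mp hn
  exact A.card_subgroup_dvd_card

theorem exists_orderOf_eq_mul_of_prime_dvd_natCard [Finite G] {p q : ℕ} [Fact p.Prime]
    [Fact q.Prime] (hpq : p ≠ q) (hp : p ∣ Nat.card G) (hq : q ∣ Nat.card G) :
    ∃ g : G, orderOf g = p * q := by
  obtain ⟨a, ha⟩ := exists_prime_orderOf_dvd_card' p hp
  obtain ⟨b, hb⟩ := exists_prime_orderOf_dvd_card' q hq
  have hcop : (orderOf a).Coprime (orderOf b) := by
    rw [ha, hb, Nat.coprime_primes Fact.out Fact.out]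
    exact hpq
  exact ⟨a * b, by rw [(Commute.all a b).orderOf_mul_eq_mul_orderOf_of_coprime hcop, ha, hb]⟩

theorem zpowers_eq_top_of_orderOf_notMem_KG {g : G} (hg : orderOf g ∉ KG G) :
    Subgroup.zpowers g = ⊤ := by
  by_contra hne
  exact hg (mem_KG_iff.mpr ⟨_, hne, Nat.card_zpowers g⟩)

end CommGroup

/-- A finite abelian `{1,2,3}`-decomposable group is isomorphic to the cyclic group `Z₆`. -/
theorem abelian_123_decomposable {G : Type*} [Group G] [Finite G]
    (hab : ∀ a b : G, a * b = b * a)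
    (h : XDecomposable G {1, 2, 3}) :
    Nonempty (G ≃* Multiplicative (ZMod 6)) := by
  let _ : CommGroup G := { ‹Group G› with mul_comm := hab }
  have hK : KG G = {1, 2, 3} := h
  obtain ⟨g, hg⟩ : ∃ g : G, orderOf g = 2 * 3 :=
    exists_orderOf_eq_mul_of_prime_dvd_natCard (by decide)
      (dvd_natCard_of_mem_KG (by simp [hK])) (dvd_natCard_of_mem_KG (by simp [hK]))
  have htop : Subgroup.zpowers g = ⊤ :=
    zpowers_eq_top_of_orderOf_notMem_KG (by simp [hK, hg])
  have hcard : Nat.card G = 6 := by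
    rw [← Subgroup.card_top, ← htop, Nat.card_zpowers, hg]
  have : IsCyclic G := isCyclic_of_orderOf_eq_card g (by rw [hg, hcard])
  exact ⟨mulEquivOfCyclicCardEq (by simp [hcard])⟩
end

section
/- Let G be a finite non-abelian {1,2,3}-decomposable group whose derived subgroup G′ has order 2. Then G′ = Z(G), G is a 2-group of order 8, and G is isomorphic to D₈ or Q₈. -/
section Presentation

variable {G : Type*} [Group G] {r s : G} {m : ℕ}

theorem pow_zmod_val_add [NeZero m] (hr : orderOf r = m) (i j : ZMod m) :
    r ^ (i + j).val = r ^ i.val * r ^ j.val := by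
  subst hr
  rw [ZMod.val_add, pow_mod_orderOf, pow_add]

theorem pow_zmod_val_natCast (hr : orderOf r = m) (k : ℕ) : r ^ (k : ZMod m).val = r ^ k := by
  subst hr
  rw [ZMod.val_natCast, pow_mod_orderOf]

theorem pow_zmod_val_eq_one_iff [NeZero m] (hr : orderOf r = m) {i : ZMod m} :
    r ^ i.val = 1 ↔ i = 0 := by
  rw [← orderOf_dvd_iff_pow_eq_one, hr, ← ZMod.val_eq_zero]
  exact ⟨fun h => Nat.eq_zero_of_dvd_of_lt h (ZMod.val_lt i), fun h => h ▸ dvd_zero m⟩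

theorem pow_zmod_val_mul_of_conj_eq_inv [NeZero m] (hr : orderOf r = m)
    (hsr : s * r * s⁻¹ = r⁻¹) (i : ZMod m) : r ^ i.val * s = s * r ^ (-i).val := by
  have hinv : r ^ (-i).val = (r ^ i.val)⁻¹ := by
    rw [eq_inv_iff_mul_eq_one, ← pow_zmod_val_add hr, neg_add_cancel, ZMod.val_zero, pow_zero]
  have hconj : s * r ^ (-i).val * s⁻¹ = r ^ i.val := by
    rw [← conj_pow, hsr, inv_pow, hinv, inv_inv]
  rw [← hconj, inv_mul_cancel_right]

theorem mul_pow_ne_one_of_notMem_zpowers (hs : s ∉ Subgroup.zpowers r) (k : ℕ) :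
    s * r ^ k ≠ 1 := fun h =>
  hs (eq_inv_of_mul_eq_one_left h ▸ inv_mem (Subgroup.npow_mem_zpowers r k))

theorem DihedralGroup.nonempty_mulEquiv_of_presentation {n : ℕ} [NeZero n] [Finite G]
    (hr : orderOf r = n) (hs : s ∉ Subgroup.zpowers r) (hsr : s * r * s⁻¹ = r⁻¹)
    (hs2 : s * s = 1) (hcard : Nat.card G = 2 * n) : Nonempty (G ≃* DihedralGroup n) := by
  let f : DihedralGroup n →* G := MonoidHom.mk'
    (fun | .r i => r ^ i.val | .sr i => s * r ^ i.val) <| by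
      rintro (i | i) (j | j) <;>
        simp only [DihedralGroup.r_mul_r, DihedralGroup.r_mul_sr, DihedralGroup.sr_mul_r,
          DihedralGroup.sr_mul_sr]
      · exact pow_zmod_val_add hr i j
      · rw [← mul_assoc, pow_zmod_val_mul_of_conj_eq_inv hr hsr, mul_assoc,
          ← pow_zmod_val_add hr, neg_add_eq_sub]
      · rw [mul_assoc, ← pow_zmod_val_add hr]
      · rw [mul_assoc, ← mul_assoc (r ^ _), pow_zmod_val_mul_of_conj_eq_inv hr hsr, ← mul_assoc,
          ← mul_assoc, hs2, one_mul, ← pow_zmod_val_add hr, neg_add_eq_sub]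
  have hinj : Function.Injective f := by
    refine (injective_iff_map_eq_one f).mpr ?_
    rintro (i | i) h
    · exact congrArg _ ((pow_zmod_val_eq_one_iff hr).mp h)
    · exact absurd h (mul_pow_ne_one_of_notMem_zpowers hs _)
  exact ⟨(MulEquiv.ofBijective f ((Nat.bijective_iff_injective_and_card f).mpr
    ⟨hinj, by rw [hcard, DihedralGroup.nat_card]⟩)).symm⟩

theorem QuaternionGroup.nonempty_mulEquiv_of_presentation {n : ℕ} [NeZero n] [Finite G]
    (hr : orderOf r = 2 * n) (hs : s ∉ Subgroup.zpowers r) (hsr : s * r * s⁻¹ = r⁻¹)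
    (hs2 : s * s = r ^ n) (hcard : Nat.card G = 4 * n) : Nonempty (G ≃* QuaternionGroup n) := by
  let f : QuaternionGroup n →* G := MonoidHom.mk'
    (fun | .a i => r ^ i.val | .xa i => s * r ^ i.val) <| by
      rintro (i | i) (j | j) <;>
        simp only [QuaternionGroup.a_mul_a, QuaternionGroup.a_mul_xa, QuaternionGroup.xa_mul_a,
          QuaternionGroup.xa_mul_xa]
      · exact pow_zmod_val_add hr i j
      · rw [← mul_assoc, pow_zmod_val_mul_of_conj_eq_inv hr hsr, mul_assoc,
          ← pow_zmod_val_add hr, neg_add_eq_sub]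
      · rw [mul_assoc, ← pow_zmod_val_add hr]
      · rw [mul_assoc, ← mul_assoc (r ^ _), pow_zmod_val_mul_of_conj_eq_inv hr hsr, ← mul_assoc,
          ← mul_assoc, hs2, mul_assoc, ← pow_zmod_val_add hr, ← pow_zmod_val_natCast hr n,
          ← pow_zmod_val_add hr, neg_add_eq_sub, add_sub_assoc]
  have hinj : Function.Injective f := by
    refine (injective_iff_map_eq_one f).mpr ?_
    rintro (i | i) h
    · exact congrArg _ ((pow_zmod_val_eq_one_iff hr).mp h)
    · exact absurd h (mul_pow_ne_one_of_notMem_zpowers hs _)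
  exact ⟨(MulEquiv.ofBijective f ((Nat.bijective_iff_injective_and_card f).mpr
    ⟨hinj, by rw [hcard, Nat.card_eq_fintype_card, QuaternionGroup.card]⟩)).symm⟩

end Presentation

section DerivedSubgroupOfOrderTwo

variable {G : Type*} [Group G]

open Subgroup

theorem Subgroup.exists_eq_one_or_eq_of_card_eq_two {H : Subgroup G} (h : Nat.card H = 2) :
    ∃ z ∈ H, z ≠ 1 ∧ ∀ w ∈ H, w = 1 ∨ w = z := by
  obtain ⟨y, hy1, hy⟩ := (Nat.card_eq_two_iff' (1 : H)).mp h
  refine ⟨y, y.2, fun h => hy1 (Subtype.ext h), fun w hw => or_iff_not_imp_left.mpr fun hw1 => ?_⟩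
  exact congrArg Subtype.val (hy ⟨w, hw⟩ fun h => hw1 (congrArg Subtype.val h))

theorem Subgroup.Normal.le_center_of_card_eq_two {N : Subgroup G} (hN : N.Normal)
    (h : Nat.card N = 2) : N ≤ center G := by
  obtain ⟨z, hzN, hz1, hN2⟩ := exists_eq_one_or_eq_of_card_eq_two h
  have hzc : z ∈ center G := mem_center_iff.mpr fun g => mul_inv_eq_iff_eq_mul.mp <|
    (hN2 _ (hN.conj_mem z hzN g)).resolve_left fun h => hz1 (conj_eq_one_iff.mp h)
  intro w hw
  rcases hN2 w hw with rfl | rfl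
  · exact one_mem _
  · exact hzc

theorem Subgroup.Normal.conjClasses_carrier_subset {N : Subgroup G} (hN : N.Normal) {x : G}
    (hx : x ∈ N) : (ConjClasses.mk x).carrier ⊆ N := by
  intro y hy
  rw [ConjClasses.mem_carrier_iff_mk_eq, ConjClasses.mk_eq_mk_iff_isConj, isConj_comm] at hy
  obtain ⟨g, rfl⟩ := isConj_iff.mp hy
  exact hN.conj_mem x hx g

theorem Subgroup.index_centralizer_singleton_eq_ncard (a : G) :
    (centralizer {a}).index = (ConjClasses.mk a).carrier.ncard := by
  rw [centralizer_eq_comap_stabilizer, ← ConjAct.orbit_eq_carrier_conjClasses,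
    ← MulAction.index_stabilizer]
  exact index_comap_of_surjective _ ConjAct.toConjAct.surjective

theorem exists_notMem_center (h : commutator G ≠ ⊥) : ∃ a, a ∉ center G := by
  by_contra! hall
  exact h ((commutator_eq_bot_iff_center_eq_top G).mpr (eq_top_iff.mpr fun a _ => hall a))

theorem exists_mul_self_ne_one (h : commutator G ≠ ⊥) : ∃ r : G, r * r ≠ 1 := by
  by_contra! hsq
  refine h ((commutator_eq_bot_iff_center_eq_top G).mpr (eq_top_iff.mpr fun x _ => ?_))
  exact mem_center_iff.mpr fun g =>
    Commute.of_orderOf_dvd_two (fun g => orderOf_dvd_of_pow_eq_one (by rw [sq, hsq])) g x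

theorem card_le_ncc [Finite G] {N : Subgroup G} (s : Finset (ConjClasses G))
    (hs : ∀ c ∈ s, c.carrier ⊆ N) : s.card ≤ ncc N :=
  calc s.card = (s : Set (ConjClasses G)).ncard := (Set.ncard_coe_finset s).symm
    _ ≤ {c : ConjClasses G | c.carrier ⊆ N}.ncard := Set.ncard_le_ncard hs
    _ = ncc N := (Nat.card_coe_set_eq _).symm

theorem ncc_le_three (h : XDecomposable G {1, 2, 3}) {N : Subgroup G} (hN : N.Normal)
    (hN' : N ≠ ⊤) : ncc N ≤ 3 := by
  have hK : ncc N ∈ KG G := ⟨N, hN, hN', rfl⟩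
  rw [h] at hK
  simp only [Set.mem_insert_iff, Set.mem_singleton_iff] at hK
  omega

variable {z : G}

theorem eq_or_eq_mul_of_isConj (hG' : ∀ w ∈ commutator G, w = 1 ∨ w = z) {x y : G}
    (h : IsConj x y) : y = x ∨ y = z * x := by
  obtain ⟨g, rfl⟩ := isConj_iff.mp h
  have hg : g * x * g⁻¹ * x⁻¹ ∈ commutator G :=
    commutator_mem_commutator (mem_top g) (mem_top x)
  exact (hG' _ hg).imp mul_inv_eq_one.mp mul_inv_eq_iff_eq_mul.mp

theorem index_centralizer_eq_two (hG' : ∀ w ∈ commutator G, w = 1 ∨ w = z) (hz1 : z ≠ 1)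
    {a : G} (ha : a ∉ center G) : (centralizer {a}).index = 2 := by
  obtain ⟨g, hg⟩ : ∃ g, g * a * g⁻¹ ≠ a := by
    by_contra! h
    exact ha (mem_center_iff.mpr fun g => mul_inv_eq_iff_eq_mul.mp (h g))
  have hclass : (ConjClasses.mk a).carrier = {a, z * a} := by
    ext y
    rw [ConjClasses.mem_carrier_iff_mk_eq, ConjClasses.mk_eq_mk_iff_isConj, isConj_comm]
    refine ⟨eq_or_eq_mul_of_isConj hG', ?_⟩
    rintro (rfl | rfl)
    · exact IsConj.refl y
    · refine isConj_iff.mpr ⟨g, ?_⟩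
      exact (eq_or_eq_mul_of_isConj hG' (isConj_iff.mpr ⟨g, rfl⟩)).resolve_left hg
  rw [index_centralizer_singleton_eq_ncard, hclass, Set.ncard_pair]
  exact fun h => hz1 (mul_eq_right.mp h.symm)

theorem mul_self_mem_center (hG' : ∀ w ∈ commutator G, w = 1 ∨ w = z) (hz1 : z ≠ 1) (x : G) :
    x * x ∈ center G := by
  refine mem_center_iff.mpr fun g => ?_
  by_cases hg : g ∈ center G
  · exact (mem_center_iff.mp hg (x * x)).symm
  · exact (mem_centralizer_singleton_iff.mp
      (mul_self_mem_of_index_two (index_centralizer_eq_two hG' hz1 hg) x)).symm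

theorem centralizer_subset_of_ncc_le_three [Finite G]
    (hG' : ∀ w ∈ commutator G, w = 1 ∨ w = z) (hz1 : z ≠ 1) (hzc : z ∈ center G)
    {a : G} (ha : a ∉ center G) (h3 : ncc (centralizer {a}) ≤ 3) :
    (centralizer {a} : Set G) ⊆ {1, z, a, z * a} := by
  classical
  have hC : (centralizer {a}).Normal :=
    normal_of_index_eq_two (index_centralizer_eq_two hG' hz1 ha)
  intro w hw
  by_contra hw'
  simp only [Set.mem_insert_iff, Set.mem_singleton_iff, not_or] at hw'
  obtain ⟨hw1, hwz, hwa, hwza⟩ := hw'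
  -- otherwise `1`, `z`, `a`, `w` are four pairwise non-conjugate elements of the centralizer
  have hne1 : ∀ x : G, x ≠ 1 → ConjClasses.mk 1 ≠ ConjClasses.mk x := fun x hx h =>
    hx (isConj_one_right.mp (ConjClasses.mk_eq_mk_iff_isConj.mp h))
  have hnez : ∀ x : G, x ≠ z → ConjClasses.mk z ≠ ConjClasses.mk x := fun x hx h =>
    hx ((ConjClasses.mk_eq_mk_iff_isConj.mp h).eq_of_left_mem_center hzc).symm
  have hnea : ConjClasses.mk a ≠ ConjClasses.mk w := fun h =>
    (eq_or_eq_mul_of_isConj hG' (ConjClasses.mk_eq_mk_iff_isConj.mp h)).elim hwa hwza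
  have ha1 : a ≠ 1 := fun h => ha (h ▸ one_mem _)
  have haz : a ≠ z := fun h => ha (h ▸ hzc)
  have h4 : ({.mk 1, .mk z, .mk a, .mk w} : Finset (ConjClasses G)).card = 4 := by
    rw [Finset.card_insert_of_notMem, Finset.card_insert_of_notMem, Finset.card_pair hnea]
    · simp [hnez, haz, hwz]
    · simp [hne1, hz1, ha1, hw1]
  have := card_le_ncc (N := centralizer {a}) {.mk 1, .mk z, .mk a, .mk w} (by
    simp only [Finset.mem_insert, Finset.mem_singleton]
    rintro c (rfl | rfl | rfl | rfl) <;> refine hC.conjClasses_carrier_subset ?_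
    exacts [one_mem _, center_le_centralizer _ hzc, mem_centralizer_singleton_iff.mpr rfl, hw])
  omega

theorem commutator_eq_center_and_card_eq_eight [Finite G] (h : XDecomposable G {1, 2, 3})
    (h2 : Nat.card (commutator G) = 2) : commutator G = center G ∧ Nat.card G = 8 := by
  obtain ⟨z, hzG', hz1, hG'⟩ := exists_eq_one_or_eq_of_card_eq_two h2
  have hG'Z : commutator G ≤ center G := (commutator_normal ⊤ ⊤).le_center_of_card_eq_two h2
  obtain ⟨a, ha⟩ := exists_notMem_center fun hbot => by rw [hbot, card_bot] at h2; omega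
  have hidx := index_centralizer_eq_two hG' hz1 ha
  have hsub := centralizer_subset_of_ncc_le_three hG' hz1 (hG'Z hzG') ha
    (ncc_le_three h (normal_of_index_eq_two hidx) fun hC => by simp [hC] at hidx)
  set C := centralizer {a}
  have haC : a ∈ C := mem_centralizer_singleton_iff.mpr rfl
  have hG'C : commutator G ≤ C := hG'Z.trans (center_le_centralizer {a})
  have hcardC : Nat.card C = 4 := by
    classical
    have hle : Nat.card C ≤ 4 := (Set.ncard_le_ncard hsub).trans (by
      rw [Set.ncard_eq_toFinset_card']
      simpa using Finset.card_le_four)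
    have hdvd : 2 ∣ Nat.card C := h2 ▸ card_dvd_of_le hG'C
    have hne : Nat.card C ≠ 2 := fun hC =>
      ha (hG'Z (eq_of_le_of_card_ge hG'C (by omega) ▸ haC))
    have := Nat.card_pos (α := C)
    omega
  refine ⟨le_antisymm hG'Z fun w hw => ?_, by rw [← C.card_mul_index, hcardC, hidx]⟩
  rcases hsub (center_le_centralizer {a} hw) with rfl | rfl | rfl | rfl
  · exact one_mem _
  · exact hzG'
  · exact absurd hw ha
  · exact absurd (by simpa using mul_mem (inv_mem (hG'Z hzG')) hw) ha

theorem exists_dihedral_or_quaternion_presentation [Finite G] (hcard : Nat.card G = 8)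
    (h2 : Nat.card (commutator G) = 2) (hZ : commutator G = center G) :
    ∃ r s : G, orderOf r = 4 ∧ s ∉ zpowers r ∧ s * r * s⁻¹ = r⁻¹ ∧
      (s * s = 1 ∨ s * s = r ^ 2) := by
  obtain ⟨z, hzG', hz1, hG'⟩ := exists_eq_one_or_eq_of_card_eq_two h2
  have hZ2 : ∀ w ∈ center G, w = 1 ∨ w = z := hZ ▸ hG'
  have hzz : z * z = 1 :=
    (hG' _ (mul_mem hzG' hzG')).resolve_right fun h => hz1 (mul_eq_left.mp h)
  obtain ⟨r, hr⟩ := exists_mul_self_ne_one (G := G) fun hbot => by rw [hbot, card_bot] at h2; omega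
  have hrr : r * r = z := (hZ2 _ (mul_self_mem_center hG' hz1 r)).resolve_left hr
  have hr4 : orderOf r = 4 := orderOf_eq_prime_pow (p := 2) (n := 1)
    (by rwa [pow_one, sq]) (by rw [sq 2, pow_mul, sq r, hrr, sq, hzz])
  have hrZ : r ∉ center G := fun h => (hZ2 r h).elim (fun h1 => hr (by rw [h1, one_mul]))
    fun h1 => hz1 (mul_eq_left.mp (h1 ▸ hrr))
  have hidx := index_centralizer_eq_two hG' hz1 hrZ
  have hCr : zpowers r = centralizer {r} := by
    refine eq_of_le_of_card_ge (zpowers_le.mpr (mem_centralizer_singleton_iff.mpr rfl)) ?_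
    have := (centralizer {r}).card_mul_index
    rw [Nat.card_zpowers, hr4, hidx, hcard] at *
    omega
  obtain ⟨s, hs⟩ : ∃ s, s ∉ centralizer {r} := by
    by_contra! h
    rw [(eq_top_iff.mpr fun x _ => h x : centralizer {r} = ⊤), index_top] at hidx
    omega
  have hsr : s * r * s⁻¹ = r⁻¹ := by
    refine ((eq_or_eq_mul_of_isConj hG' (isConj_iff.mpr ⟨s, rfl⟩)).resolve_left fun h =>
      hs (mem_centralizer_singleton_iff.mpr (mul_inv_eq_iff_eq_mul.mp h))).trans ?_
    refine eq_inv_of_mul_eq_one_left ?_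
    rw [← hrr, mul_assoc, hrr, hzz]
  refine ⟨r, s, hr4, hCr ▸ hs, hsr, ?_⟩
  rcases hZ2 _ (mul_self_mem_center hG' hz1 s) with h | h
  · exact Or.inl h
  · exact Or.inr (by rw [h, sq, hrr])

end DerivedSubgroupOfOrderTwo

theorem nonabelian_123_derived_order_two_general {G : Type*} [Group G] [Finite G]
    (h : XDecomposable G {1, 2, 3}) (h2 : Nat.card (commutator G) = 2) :
    commutator G = Subgroup.center G ∧ IsPGroup 2 G ∧ Nat.card G = 8 ∧
      (Nonempty (G ≃* DihedralGroup 4) ∨ Nonempty (G ≃* QuaternionGroup 2)) := by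
  obtain ⟨hZ, hcard⟩ := commutator_eq_center_and_card_eq_eight h h2
  refine ⟨hZ, IsPGroup.of_card (n := 3) hcard, hcard, ?_⟩
  obtain ⟨r, s, hr, hs, hsr, hs2 | hs2⟩ := exists_dihedral_or_quaternion_presentation hcard h2 hZ
  · exact Or.inl (DihedralGroup.nonempty_mulEquiv_of_presentation hr hs hsr hs2 hcard)
  · exact Or.inr (QuaternionGroup.nonempty_mulEquiv_of_presentation hr hs hsr hs2 hcard)

/-- A finite non-abelian `{1,2,3}`-decomposable group whose derived subgroup has order 2
satisfies `G' = Z(G)`, is a 2-group of order 8, and is isomorphic to `D₈` or `Q₈`. -/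
theorem nonabelian_123_derived_order_two {G : Type*} [Group G] [Finite G]
    (hna : ¬ ∀ a b : G, a * b = b * a)
    (h : XDecomposable G {1, 2, 3}) (h2 : Nat.card (commutator G) = 2) :
    commutator G = Subgroup.center G ∧ IsPGroup 2 G ∧ Nat.card G = 8 ∧
      (Nonempty (G ≃* DihedralGroup 4) ∨ Nonempty (G ≃* QuaternionGroup 2)) :=
  nonabelian_123_derived_order_two_general h h2
end
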